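/- arXiv:2208.04640 — 10 statements merged into one kernel-verified Lean document; each statement's English description precedes it below -/
import Mathlib

section
/- Let k be an algebraically closed field of characteristic zero and let A ∈ z²k[[z]] have order n ≥ 2. Then there exists a formal power series β of order one such that A ∘ β = β ∘ zⁿ. -/
/-!
Write `A = a z ^ (d + 1) + O(z ^ (d + 2))` and look for `β = c z + b₂ z² + ⋯` with
`a c ^ d = 1`, which is where algebraic closedness enters. In the coefficient of `z ^ (j + d)` of
`A ∘ β = β ∘ z ^ (d + 1)`, for `j ≥ 2`, the unknown `b_j` occurs only in `a β ^ (d + 1)`, and only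
linearly, with factor `(d + 1) a c ^ d = d + 1 ≠ 0`: the remaining terms of the left-hand side,
and the right-hand side `b_{(j + d) / (d + 1)}`, involve only `b_t` with `t < j`. So the
coefficients of `β` are determined by strong recursion.
-/

open PowerSeries

/-- Composition `A ∘ B` of formal power series, well defined (and agreeing with the usual
substitution) when `ord B ≥ 1`. -/
noncomputable def psComp {k : Type*} [Field k] (A B : PowerSeries k) : PowerSeries k :=
  PowerSeries.mk fun n =>
    ∑ i ∈ Finset.range (n + 1), (PowerSeries.coeff i A) * PowerSeries.coeff n (B ^ i)

theorem Nat.exists_fix_of_congr_lt {α : Type*} [Nonempty α] (F : ℕ → (ℕ → α) → α)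
    (hF : ∀ j f g, (∀ t < j, f t = g t) → F j f = F j g) : ∃ b : ℕ → α, ∀ j, b j = F j b := by
  let b : ℕ → α := Nat.lt_wfRel.wf.fix fun j IH =>
    F j fun t => if h : t < j then IH t h else Classical.arbitrary α
  refine ⟨b, fun j => ?_⟩
  rw [show b j = _ from Nat.lt_wfRel.wf.fix_eq _ j]
  exact hF j _ _ fun t ht => dif_pos ht

section CommRing

variable {R : Type*} [CommRing R]

theorem pow_add_dvd_pow_succ_sub_pow_succ {x P Q : R} (hP : x ∣ P) (hQ : x ∣ Q) {m : ℕ}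
    (h : x ^ m ∣ P - Q) (i : ℕ) : x ^ (m + i) ∣ P ^ (i + 1) - Q ^ (i + 1) := by
  induction i with
  | zero => simpa using h
  | succ i ih =>
    rw [show P ^ (i + 2) - Q ^ (i + 2)
        = P ^ (i + 1) * (P - Q) + (P ^ (i + 1) - Q ^ (i + 1)) * Q by ring]
    refine dvd_add ?_ ?_
    · rw [add_comm m, pow_add]
      exact mul_dvd_mul (pow_dvd_pow_of_dvd hP _) h
    · rw [← add_assoc, pow_succ x]
      exact mul_dvd_mul ih hQ

theorem pow_dvd_add_pow_sub_pow_sub_mul {x P E : R} (hP : x ∣ P) {j : ℕ} (hE : x ^ (j + 1) ∣ E)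
    (n : ℕ) : x ^ (n + 1 + 2 * j) ∣ (P + E) ^ (n + 1) - P ^ (n + 1) - (n + 1) * P ^ n * E := by
  induction n with
  | zero => simp
  | succ n ih =>
    push_cast
    rw [show (P + E) ^ (n + 1 + 1) - P ^ (n + 1 + 1) - (n + 1 + 1) * P ^ (n + 1) * E
        = (n + 1) * P ^ n * E ^ 2
          + (P + E) * ((P + E) ^ (n + 1) - P ^ (n + 1) - (n + 1) * P ^ n * E) by ring]
    refine dvd_add ?_ ?_
    · rw [show n + 1 + 1 + 2 * j = n + (j + 1) * 2 by ring, pow_add, pow_mul]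
      exact mul_dvd_mul (dvd_mul_of_dvd_right (pow_dvd_pow_of_dvd hP n) _) (pow_dvd_pow_of_dvd hE 2)
    · rw [show n + 1 + 1 + 2 * j = 1 + (n + 1 + 2 * j) by ring, pow_add, pow_one]
      exact mul_dvd_mul (dvd_add hP (dvd_trans (dvd_pow_self x (by omega)) hE)) ih

namespace PowerSeries

theorem coeff_eq_of_X_pow_dvd_sub {f g : R⟦X⟧} {m t : ℕ} (h : X ^ m ∣ f - g) (ht : t < m) :
    coeff t f = coeff t g :=
  sub_eq_zero.mp (by simpa using X_pow_dvd_iff.mp h t ht)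

theorem coeff_pow_self {P : R⟦X⟧} (hP : X ∣ P) (i : ℕ) : coeff i (P ^ i) = coeff 1 P ^ i := by
  obtain ⟨Q, rfl⟩ := hP
  simp [mul_pow, coeff_X_pow_mul', coeff_zero_eq_constantCoeff]

theorem X_pow_dvd_sub_trunc (f : R⟦X⟧) (n : ℕ) : X ^ n ∣ f - (trunc n f : R⟦X⟧) :=
  X_pow_dvd_iff.mpr fun t ht => by simp [Polynomial.coeff_coe, coeff_trunc, ht]

theorem X_pow_succ_dvd_sub_trunc_add (f : R⟦X⟧) (n : ℕ) :
    X ^ (n + 1) ∣ f - ((trunc n f : R⟦X⟧) + C (coeff n f) * X ^ n) :=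
  X_pow_dvd_iff.mpr fun t ht => by
    rcases Nat.lt_succ_iff_lt_or_eq.mp ht with ht | rfl
    · simp [Polynomial.coeff_coe, coeff_trunc, ht, ht.ne]
    · simp [Polynomial.coeff_coe, coeff_trunc]

theorem X_dvd_trunc {f : R⟦X⟧} (hf : X ∣ f) (n : ℕ) : X ∣ (trunc n f : R⟦X⟧) := by
  rw [X_dvd_iff, ← coeff_zero_eq_constantCoeff_apply, Polynomial.coeff_coe, coeff_trunc]
  split_ifs
  · rwa [coeff_zero_eq_constantCoeff_apply, ← X_dvd_iff]
  · rfl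

theorem coeff_pow_eq_coeff_trunc_pow {β : R⟦X⟧} (hβ : X ∣ β) {m j i : ℕ} (hm : m + 1 < j + i) :
    coeff m (β ^ i) = coeff m ((trunc j β : R⟦X⟧) ^ i) := by
  obtain _ | i := i
  · rfl
  · exact coeff_eq_of_X_pow_dvd_sub
      (pow_add_dvd_pow_succ_sub_pow_succ hβ (X_dvd_trunc hβ j) (X_pow_dvd_sub_trunc β j) i)
      (by omega)

theorem coeff_pow_eq_coeff_trunc_pow_add {β : R⟦X⟧} (hβ : X ∣ β) {j : ℕ} (hj : 2 ≤ j) (n : ℕ) :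
    coeff (j + n) (β ^ (n + 1)) = coeff (j + n) ((trunc j β : R⟦X⟧) ^ (n + 1))
      + (n + 1) * coeff 1 β ^ n * coeff j β := by
  set T : R⟦X⟧ := (trunc j β : R⟦X⟧)
  set E : R⟦X⟧ := C (coeff j β) * X ^ j
  have hT : X ∣ T := X_dvd_trunc hβ j
  have hβT : coeff (j + n) (β ^ (n + 1)) = coeff (j + n) ((T + E) ^ (n + 1)) :=
    coeff_eq_of_X_pow_dvd_sub (pow_add_dvd_pow_succ_sub_pow_succ hβ
      (dvd_add hT (dvd_mul_of_dvd_right (dvd_pow_self X (by omega)) _))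
      (X_pow_succ_dvd_sub_trunc_add β j) n) (by omega)
  have hE : X ^ (j - 1 + 1) ∣ E := dvd_mul_of_dvd_right (by rw [Nat.sub_add_cancel (by omega)]) _
  have hlin := coeff_eq_of_X_pow_dvd_sub (pow_dvd_add_pow_sub_pow_sub_mul hT hE n)
    (t := j + n) (by omega)
  have hT1 : coeff 1 T = coeff 1 β := by
    simp [T, Polynomial.coeff_coe, coeff_trunc, show 1 < j by omega]
  rw [map_sub, sub_eq_iff_eq_add] at hlin
  rw [hβT, hlin, add_comm, ← mul_assoc, add_comm j n, coeff_mul_X_pow, coeff_mul_C,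
    show ((n : R⟦X⟧) + 1) = C ((n : R) + 1) by simp, coeff_C_mul, coeff_pow_self hT, hT1]

end PowerSeries

end CommRing

section Field

variable {k : Type*} [Field k]

theorem coeff_psComp (A B : k⟦X⟧) (m : ℕ) :
    coeff m (psComp A B) = ∑ i ∈ Finset.range (m + 1), coeff i A * coeff m (B ^ i) :=
  coeff_mk _ _

theorem coeff_psComp_X_pow (β : k⟦X⟧) {n : ℕ} (hn : 0 < n) (m : ℕ) :
    coeff m (psComp β (X ^ n)) = if n ∣ m then coeff (m / n) β else 0 := by
  simp_rw [coeff_psComp, ← pow_mul, coeff_X_pow, mul_ite, mul_one, mul_zero]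
  split_ifs with hd
  · obtain ⟨q, rfl⟩ := hd
    simp_rw [Nat.mul_div_cancel_left q hn, mul_right_inj' hn.ne', eq_comm (a := q)]
    rw [Finset.sum_ite_eq', if_pos (Finset.mem_range_succ_iff.mpr (Nat.le_mul_of_pos_left q hn))]
  · exact Finset.sum_eq_zero fun i _ => if_neg fun h => hd ⟨i, h⟩

variable {A : k⟦X⟧} {n : ℕ}

theorem coeff_psComp_of_lt (hA : ∀ i < n, coeff i A = 0) (β : k⟦X⟧) {m : ℕ} (hm : m < n) :
    coeff m (psComp A β) = 0 :=
  (coeff_psComp A β m).trans <| Finset.sum_eq_zero fun i hi => by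
    rw [hA i (by rw [Finset.mem_range] at hi; omega), zero_mul]

theorem coeff_psComp_self (hA : ∀ i < n, coeff i A = 0) {β : k⟦X⟧} (hβ : X ∣ β) :
    coeff n (psComp A β) = coeff n A * coeff 1 β ^ n := by
  rw [coeff_psComp, Finset.sum_eq_single_of_mem n (by simp), coeff_pow_self hβ]
  intro i hi hin
  rw [hA i (by rw [Finset.mem_range] at hi; omega), zero_mul]

theorem coeff_psComp_eq_coeff_psComp_trunc_add (hA : ∀ i < n + 1, coeff i A = 0) {β : k⟦X⟧}
    (hβ : X ∣ β) {j : ℕ} (hj : 2 ≤ j) :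
    coeff (j + n) (psComp A β) = coeff (j + n) (psComp A (trunc j β))
      + (n + 1) * coeff (n + 1) A * coeff 1 β ^ n * coeff j β := by
  have hterm : ∀ i ∈ Finset.range (j + n + 1), coeff i A * coeff (j + n) (β ^ i)
      = coeff i A * coeff (j + n) ((trunc j β : k⟦X⟧) ^ i)
        + if i = n + 1 then (n + 1) * coeff (n + 1) A * coeff 1 β ^ n * coeff j β else 0 := by
    intro i _
    rcases lt_trichotomy i (n + 1) with hi | rfl | hi
    · simp [hA i hi, hi.ne]
    · rw [coeff_pow_eq_coeff_trunc_pow_add hβ hj, if_pos rfl]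
      ring
    · rw [coeff_pow_eq_coeff_trunc_pow hβ (j := j) (by omega), if_neg hi.ne', add_zero]
  rw [coeff_psComp, coeff_psComp, Finset.sum_congr rfl hterm, Finset.sum_add_distrib,
    Finset.sum_ite_eq', if_pos (Finset.mem_range.mpr (by omega))]

/-- For `A` of order `n + 1` (note the shift) and `coeff (n + 1) A * c ^ n = 1`: the coefficient
`b j`, `j ≥ 2`, solved from the coefficient of `X ^ (j + n)` in `A ∘ β = β ∘ X ^ (n + 1)`. -/
noncomputable def boettcherRec (A : k⟦X⟧) (n : ℕ) (c : k) (j : ℕ) (f : ℕ → k) : k :=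
  if j = 0 then 0 else if j = 1 then c else
    ((if n + 1 ∣ j + n then f ((j + n) / (n + 1)) else 0)
      - coeff (j + n) (psComp A (trunc j (mk f)))) / (n + 1)

theorem boettcherRec_congr (A : k⟦X⟧) {n : ℕ} (hn : 1 ≤ n) (c : k) {j : ℕ} {f g : ℕ → k}
    (hfg : ∀ t < j, f t = g t) : boettcherRec A n c j f = boettcherRec A n c j g := by
  obtain rfl | rfl | hj : j = 0 ∨ j = 1 ∨ 2 ≤ j := by omega
  · rfl
  · rfl
  have htrunc : trunc j (mk f) = trunc j (mk g) := by
    ext t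
    simp only [coeff_trunc, coeff_mk]
    split_ifs with ht
    exacts [hfg t ht, rfl]
  have hlt : (j + n) / (n + 1) < j := by
    rw [Nat.div_lt_iff_lt_mul (by omega)]
    nlinarith
  simp only [boettcherRec, if_neg (by omega : j ≠ 0), if_neg (by omega : j ≠ 1), htrunc, hfg _ hlt]

theorem exists_psComp_eq_psComp_X_pow [CharZero k] (hn : 1 ≤ n) (hA : ∀ i < n + 1, coeff i A = 0)
    {c : k} (hc : coeff (n + 1) A * c ^ n = 1) :
    ∃ β : k⟦X⟧, β.order = 1 ∧ psComp A β = psComp β (X ^ (n + 1)) := by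
  obtain ⟨b, hb⟩ := Nat.exists_fix_of_congr_lt (boettcherRec A n c)
    fun j f g => boettcherRec_congr A hn c
  set β : k⟦X⟧ := mk b
  have h0 : coeff 0 β = 0 := by rw [coeff_mk, hb, boettcherRec, if_pos rfl]
  have h1 : coeff 1 β = c := by rw [coeff_mk, hb, boettcherRec, if_neg one_ne_zero, if_pos rfl]
  have hβ : X ∣ β := X_dvd_iff.mpr (by rwa [← coeff_zero_eq_constantCoeff_apply])
  refine ⟨β, ?_, ext fun m => ?_⟩
  · have hc0 : c ≠ 0 := by
      rintro rfl
      simp [zero_pow (by omega : n ≠ 0)] at hc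
    exact_mod_cast order_eq_nat.mpr ⟨h1 ▸ hc0, fun i hi => by rwa [Nat.lt_one_iff.mp hi]⟩
  rw [coeff_psComp_X_pow β (by omega : 0 < n + 1)]
  rcases lt_trichotomy m (n + 1) with hm | rfl | hm
  · rw [coeff_psComp_of_lt hA β hm]
    split_ifs with hd
    · rw [Nat.eq_zero_of_dvd_of_lt hd hm, Nat.zero_div, h0]
    · rfl
  · rw [coeff_psComp_self hA hβ, if_pos dvd_rfl, Nat.div_self (by omega), h1, pow_succ,
      ← mul_assoc, hc, one_mul]
  · obtain ⟨j, hj, rfl⟩ : ∃ j, 2 ≤ j ∧ m = j + n := ⟨m - n, by omega, by omega⟩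
    have hbj := hb j
    rw [boettcherRec, if_neg (by omega), if_neg (by omega)] at hbj
    rw [coeff_psComp_eq_coeff_psComp_trunc_add hA hβ hj, h1, mul_assoc _ (coeff (n + 1) A),
      mul_assoc, hc, one_mul, coeff_mk, hbj, mul_div_cancel₀ _ (Nat.cast_add_one_ne_zero n)]
    simp only [β, coeff_mk]
    ring

end Field

/-- Existence of a Böttcher function: if `k` is an algebraically closed field of characteristic
zero and `A ∈ z²k[[z]]` has order `n ≥ 2`, then there is a formal power series `β` of order one
with `A ∘ β = β ∘ zⁿ`. -/
theorem exists_boettcher {k : Type*} [Field k] [IsAlgClosed k] [CharZero k]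
    (A : PowerSeries k) (n : ℕ) (hn : 2 ≤ n) (hA : A.order = n) :
    ∃ β : PowerSeries k, β.order = 1 ∧ psComp A β = psComp β (PowerSeries.X ^ n) := by
  obtain ⟨hAn, hAlow⟩ := order_eq_nat.mp hA
  obtain ⟨d, rfl⟩ : ∃ d, n = d + 1 := ⟨n - 1, by omega⟩
  obtain ⟨c, hc⟩ := IsAlgClosed.exists_pow_nat_eq (coeff (d + 1) A)⁻¹ (by omega : 0 < d)
  exact exists_psComp_eq_psComp_X_pow (by omega) hAlow (by rw [hc, mul_inv_cancel₀ hAn])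
end

section
/- Let S be a right cancellative semigroup containing no free subsemigroup of rank two. Then S is right reversible, i.e., for all a, b ∈ S there exist x, y ∈ S with xa = yb. -/
/-- A semigroup `S` contains a free subsemigroup of rank two if there are `u, v ∈ S` such that
distinct words in `u, v` represent distinct elements, i.e. the canonical homomorphism from the
free semigroup on two generators sending the generators to `u` and `v` is injective. -/
def HasFreeSubsemigroupRankTwo (S : Type*) [Semigroup S] : Prop :=
  ∃ u v : S, Function.Injective
    ⇑(FreeSemigroup.lift (fun b : Bool => if b then v else u) : FreeSemigroup Bool →ₙ* S)

section Aux

variable {S : Type*} [Semigroup S]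

/-- Evaluate a reversed word: the head of the list is the *last* letter of the word. -/
def revEv (f : Bool → S) : List Bool → S
  | [] => f false
  | [c] => f c
  | c :: l :: ls => revEv f (l :: ls) * f c

lemma revEv_cons (f : Bool → S) (c : Bool) (m : List Bool) (hm : m ≠ []) :
    revEv f (c :: m) = revEv f m * f c := by
  match m with
  | [] => exact absurd rfl hm
  | l :: ls => rfl

lemma lift_eq_revEv (f : Bool → S) (h : Bool) (t : List Bool) :
    (FreeSemigroup.lift f) ⟨h, t⟩ = revEv f ((h :: t).reverse) := by
  induction t using List.reverseRecOn with
  | nil => rfl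
  | append_singleton t c ih =>
    have h1 : (FreeSemigroup.lift f) ⟨h, t ++ [c]⟩ =
        (FreeSemigroup.lift f) ⟨h, t⟩ * f c := by
      show List.foldl (fun a b => a * f b) (f h) (t ++ [c]) = _
      rw [List.foldl_append]
      rfl
    have h2 : (h :: (t ++ [c])).reverse = c :: (h :: t).reverse := by simp
    rw [h1, ih, h2, revEv_cons _ _ _ (by simp)]

variable (a b : S)

/-- If some element has a left identity, we can finish. -/
lemma finish_of_left_fix (hrc : ∀ a b c : S, b * a = c * a → b = c) (e t : S) (het : e * t = t)
    (hd : (∃ p, e = p * a) ∨ e = a ∨ (∃ p, e = p * b) ∨ e = b) :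
    ∃ x y : S, x * a = y * b := by
  have he2 : e * e = e := hrc t (e * e) e (by rw [mul_assoc, het, het])
  have rid : ∀ z : S, z * e = z := fun z =>
    hrc e (z * e) z (by rw [mul_assoc, he2])
  rcases hd with ⟨p, hp⟩ | he | ⟨p, hp⟩ | he
  · exact ⟨a * b * p, a, by rw [mul_assoc, ← hp, rid]⟩
  · exact ⟨a * b, a, by rw [← he, rid]⟩
  · exact ⟨b, b * a * p, by rw [mul_assoc, ← hp, rid]⟩
  · exact ⟨b, b * a, by rw [← he, rid]⟩

/-- Decomposition of the value of a nonempty reversed word by its last letter. -/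
lemma revEv_decomp (m : List Bool) (hm : m ≠ []) :
    (∃ p, revEv (fun c => if c then b else a) m = p * a) ∨
      revEv (fun c => if c then b else a) m = a ∨
      (∃ p, revEv (fun c => if c then b else a) m = p * b) ∨
      revEv (fun c => if c then b else a) m = b := by
  match m with
  | [c] =>
    cases c
    · right; left; rfl
    · right; right; right; rfl
  | c :: l :: ls =>
    rw [revEv_cons _ _ _ (by simp)]
    cases c
    · exact Or.inl ⟨revEv _ (l :: ls), rfl⟩
    · exact Or.inr (Or.inr (Or.inl ⟨revEv _ (l :: ls), rfl⟩))

lemma main_induction (hrc : ∀ a b c : S, b * a = c * a → b = c) :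
    ∀ l1 l2 : List Bool, l1 ≠ [] → l2 ≠ [] → l1 ≠ l2 →
      revEv (fun c => if c then b else a) l1 = revEv (fun c => if c then b else a) l2 →
      ∃ x y : S, x * a = y * b := by
  set f : Bool → S := fun c => if c then b else a with hf
  have hfa : f false = a := rfl
  have hfb : f true = b := rfl
  intro l1
  induction l1 with
  | nil => intro l2 h1; exact absurd rfl h1
  | cons c1 m1 ih =>
    intro l2 _ h2 hne heq
    match l2 with
    | c2 :: m2 =>
      by_cases hcc : c1 = c2
      · -- same last letter: cancel it
        subst hcc
        match hm1 : m1, hm2 : m2 with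
        | [], [] => exact absurd rfl hne
        | [], l :: ls =>
          -- f c1 = revEv (l::ls) * f c1
          rw [revEv_cons f c1 (l :: ls) (by simp)] at heq
          have het : revEv f (l :: ls) * f c1 = f c1 := heq.symm
          exact finish_of_left_fix a b hrc _ _ het (revEv_decomp a b (l :: ls) (by simp))
        | l :: ls, [] =>
          rw [revEv_cons f c1 (l :: ls) (by simp)] at heq
          exact finish_of_left_fix a b hrc _ _ heq (revEv_decomp a b (l :: ls) (by simp))
        | l :: ls, l' :: ls' =>
          rw [revEv_cons f c1 (l :: ls) (by simp),
            revEv_cons f c1 (l' :: ls') (by simp)] at heq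
          have hmm : revEv f (l :: ls) = revEv f (l' :: ls') :=
            hrc (f c1) _ _ heq
          exact ih (l' :: ls') (by simp) (by simp)
            (fun h => hne (by rw [h])) hmm
      · -- different last letters
        have key : ∀ (m1 m2 : List Bool),
            revEv f (false :: m1) = revEv f (true :: m2) → ∃ x y : S, x * a = y * b := by
          intro m1 m2 heq
          match m1, m2 with
          | [], [] =>
            -- a = b
            have : a = b := heq
            exact ⟨a, a, by rw [this]⟩
          | [], l :: ls =>
            rw [revEv_cons f true (l :: ls) (by simp)] at heq
            -- a = e * b
            exact ⟨b, b * revEv f (l :: ls), by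
              rw [show (a : S) = revEv f (l :: ls) * b from heq, ← mul_assoc]⟩
          | l :: ls, [] =>
            rw [revEv_cons f false (l :: ls) (by simp)] at heq
            -- e * a = b
            exact ⟨a * revEv f (l :: ls), a, by
              rw [mul_assoc, show revEv f (l :: ls) * a = b from heq]⟩
          | l :: ls, l' :: ls' =>
            rw [revEv_cons f false (l :: ls) (by simp),
              revEv_cons f true (l' :: ls') (by simp)] at heq
            exact ⟨revEv f (l :: ls), revEv f (l' :: ls'), heq⟩
        cases c1
        · have hc2 : c2 = true := by
            cases c2
            · exact absurd rfl hcc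
            · rfl
          subst hc2
          exact key m1 m2 heq
        · have hc2 : c2 = false := by
            cases c2
            · rfl
            · exact absurd rfl hcc
          subst hc2
          exact key m2 m1 heq.symm

end Aux

/-- A right cancellative semigroup containing no free subsemigroup of rank two is
right reversible: for all `a, b` there exist `x, y` with `xa = yb`. -/
theorem right_reversible_of_right_cancellative_of_no_free
    {S : Type*} [Semigroup S] (hrc : ∀ a b c : S, b * a = c * a → b = c)
    (hfree : ¬ HasFreeSubsemigroupRankTwo S) :
    ∀ a b : S, ∃ x y : S, x * a = y * b := by
  intro a b
  have hni : ¬ Function.Injective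
      ⇑(FreeSemigroup.lift (fun c : Bool => if c then b else a) : FreeSemigroup Bool →ₙ* S) :=
    fun h => hfree ⟨a, b, h⟩
  rw [Function.Injective] at hni
  push_neg at hni
  obtain ⟨x, y, hxy, hne⟩ := hni
  obtain ⟨hx, tx⟩ := x
  obtain ⟨hy, ty⟩ := y
  rw [lift_eq_revEv, lift_eq_revEv] at hxy
  refine main_induction a b hrc _ _ (by simp) (by simp) ?_ hxy
  intro h
  have : (hx :: tx) = (hy :: ty) := by
    have := congrArg List.reverse h
    simpa using this
  apply hne
  simp only [List.cons.injEq] at this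
  exact FreeSemigroup.ext this.1 this.2
end

section
/- Every right amenable semigroup is right reversible. -/
/-- A semigroup is right amenable if it carries a finitely additive probability measure on all
subsets which is invariant under right division: `μ(Ta⁻¹) = μ(T)` where `Ta⁻¹ = {s : sa ∈ T}`. -/
def RightAmenable (S : Type*) [Mul S] : Prop :=
  ∃ μ : Set S → ℝ, μ Set.univ = 1 ∧ (∀ T : Set S, 0 ≤ μ T) ∧
    (∀ T₁ T₂ : Set S, Disjoint T₁ T₂ → μ (T₁ ∪ T₂) = μ T₁ + μ T₂) ∧
    (∀ (a : S) (T : Set S), μ {s | s * a ∈ T} = μ T)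

/-- Every right amenable semigroup is right reversible. -/
theorem right_reversible_of_rightAmenable {S : Type*} [Semigroup S]
    (h : RightAmenable S) : ∀ a b : S, ∃ x y : S, x * a = y * b := by
  obtain ⟨μ, huniv, hpos, hadd, hinv⟩ := h
  intro a b
  by_contra hc
  push_neg at hc
  set A : Set S := {t | ∃ x, x * a = t} with hA
  set B : Set S := {t | ∃ y, y * b = t} with hB
  have hmuA : μ A = 1 := by
    have h1 : {s | s * a ∈ A} = Set.univ := by
      ext s; simp only [Set.mem_setOf_eq, Set.mem_univ, iff_true]; exact ⟨s, rfl⟩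
    have := hinv a A
    rw [h1, huniv] at this; exact this.symm
  have hmuB : μ B = 1 := by
    have h1 : {s | s * b ∈ B} = Set.univ := by
      ext s; simp only [Set.mem_setOf_eq, Set.mem_univ, iff_true]; exact ⟨s, rfl⟩
    have := hinv b B
    rw [h1, huniv] at this; exact this.symm
  have hdisj : Disjoint A B := by
    rw [Set.disjoint_left]
    rintro t ⟨x, hx⟩ ⟨y, hy⟩
    exact hc x y (hx.trans hy.symm)
  have hAB : μ (A ∪ B) = 2 := by rw [hadd A B hdisj, hmuA, hmuB]; norm_num
  have hsplit : μ Set.univ = μ (A ∪ B) + μ (A ∪ B)ᶜ := by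
    rw [← hadd _ _ (disjoint_compl_right), Set.union_compl_self]
  have := hpos (A ∪ B)ᶜ
  rw [huniv, hAB] at hsplit
  linarith
end

section
/- Let Z^U denote the semigroup under composition of monomials ωz^n over a field k of characteristic zero, where n ≥ 2 and ω is a root of unity. Then no subsemigroup of Z^U contains a free subsemigroup of rank two. -/
open Polynomial

/-- `PolyComp k` is the type of polynomials over `k`, regarded as a semigroup under
composition `p * q = p ∘ q`. -/
def PolyComp (k : Type*) [Semiring k] := Polynomial k

/-- Regard a polynomial as an element of `PolyComp k`. -/
def PolyComp.of {k : Type*} [Semiring k] (p : Polynomial k) : PolyComp k := p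

/-- The polynomial underlying an element of `PolyComp k`. -/
def PolyComp.toPoly {k : Type*} [Semiring k] (p : PolyComp k) : Polynomial k := p

noncomputable instance (k : Type*) [Field k] : Semigroup (PolyComp k) where
  mul p q := PolyComp.of (p.toPoly.comp q.toPoly)
  mul_assoc p q r := Polynomial.comp_assoc p.toPoly q.toPoly r.toPoly

/-- `ZU k` is the subsemigroup (under composition) of all monomials `ω z^n` with `ω` a root of
unity and `n ≥ 2`. -/
def ZU (k : Type*) [Field k] : Subsemigroup (PolyComp k) where
  carrier := {p : PolyComp k | ∃ (ω : k) (n : ℕ),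
    (∃ m : ℕ, 0 < m ∧ ω ^ m = 1) ∧ 2 ≤ n ∧ p.toPoly = C ω * X ^ n}
  mul_mem' := by
    rintro p q ⟨ω, n, ⟨m₁, hm₁, hω⟩, hn, hp⟩ ⟨δ, m, ⟨m₂, hm₂, hδ⟩, hm, hq⟩
    refine ⟨ω * δ ^ n, m * n, ⟨m₁ * m₂, by positivity, ?_⟩, ?_, ?_⟩
    · have h1 : ω ^ (m₁ * m₂) = 1 := by rw [pow_mul, hω, one_pow]
      have h2 : (δ ^ n) ^ (m₁ * m₂) = 1 := by
        rw [← pow_mul, mul_comm n (m₁ * m₂), pow_mul, mul_comm m₁ m₂, pow_mul, hδ, one_pow,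
          one_pow]
      rw [mul_pow, h1, h2, one_mul]
    · nlinarith
    · show (p.toPoly.comp q.toPoly) = _
      rw [hp, hq, Polynomial.mul_comp, Polynomial.C_comp, Polynomial.X_pow_comp, mul_pow,
        ← map_pow, ← pow_mul, map_mul, mul_assoc]

private lemma monomial_comp' {k : Type*} [Field k] (a b : k) (e d : ℕ) :
    (C a * X ^ e).comp (C b * X ^ d) = C (a * b ^ e) * X ^ (e * d) := by
  rw [mul_comp, C_comp, X_pow_comp, mul_pow, ← C_pow, ← pow_mul, mul_comm d e, map_mul, mul_assoc]

private def fpow' : ℕ → FreeSemigroup Bool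
  | 0 => .of false
  | (j+1) => .of false * fpow' j

private lemma fpow'_eq (j : ℕ) : fpow' j = ⟨false, List.replicate j false⟩ := by
  induction j with
  | zero => rfl
  | succ j ih =>
    show FreeSemigroup.of false * fpow' j = _
    rw [ih, List.replicate_succ]
    rfl

private lemma repl_inj' : ∀ (i j : ℕ) (l1 l2 : List Bool),
    List.replicate i false ++ true :: l1 = List.replicate j false ++ true :: l2 → i = j := by
  intro i
  induction i with
  | zero =>
    intro j l1 l2 h
    cases j with
    | zero => rfl
    | succ j => simp [List.replicate_succ] at h
  | succ i ih =>
    intro j l1 l2 h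
    cases j with
    | zero => simp [List.replicate_succ] at h
    | succ j =>
      rw [List.replicate_succ, List.replicate_succ, List.cons_append, List.cons_append,
        List.cons_eq_cons] at h
      exact congrArg Nat.succ (ih j l1 l2 h.2)

/-- No subsemigroup of `Z^U` contains a free subsemigroup of rank two. -/
theorem no_free_subsemigroup_of_le_ZU {k : Type*} [Field k] [CharZero k]
    (T : Subsemigroup (PolyComp k)) (hT : T ≤ ZU k) :
    ¬ HasFreeSubsemigroupRankTwo T := by
  classical
  rintro ⟨u, v, hf⟩
  set f := (FreeSemigroup.lift (fun b : Bool => if b then v else u) :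
    FreeSemigroup Bool →ₙ* T) with hfdef
  obtain ⟨ω, n, ⟨m₁, hm₁, hω⟩, hn, hu⟩ := hT u.2
  obtain ⟨δ, m, ⟨m₂, hm₂, hδ⟩, hm, hv⟩ := hT v.2
  set D := m₁ * m₂ with hD
  have hDpos : 0 < D := Nat.mul_pos hm₁ hm₂
  have hωD : ω ^ D = 1 := by rw [hD, pow_mul, hω, one_pow]
  have hδD : δ ^ D = 1 := by rw [hD, mul_comm, pow_mul, hδ, one_pow]
  have hfu : f (FreeSemigroup.of false) = u := by simp [hfdef]
  have hfv : f (FreeSemigroup.of true) = v := by simp [hfdef]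
  -- images of powers of `of false`
  have key : ∀ j : ℕ, ∃ c : k, c ^ D = 1 ∧
      ((f (fpow' j) : PolyComp k)).toPoly = C c * X ^ (n ^ (j + 1)) := by
    intro j
    induction j with
    | zero =>
      refine ⟨ω, hωD, ?_⟩
      show ((f (FreeSemigroup.of false) : PolyComp k)).toPoly = _
      rw [hfu, pow_one]
      exact hu
    | succ j ih =>
      obtain ⟨c, hc, hcp⟩ := ih
      refine ⟨ω * c ^ n, ?_, ?_⟩
      · rw [mul_pow, hωD, ← pow_mul, mul_comm n D, pow_mul, hc, one_pow, one_mul]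
      · show ((f (FreeSemigroup.of false * fpow' j) : PolyComp k)).toPoly = _
        rw [map_mul, hfu]
        show ((u : PolyComp k).toPoly.comp ((f (fpow' j) : PolyComp k)).toPoly) = _
        rw [hu, hcp, monomial_comp', ← pow_succ']
      -- done
  -- the words
  set w : ℕ → FreeSemigroup Bool := fun i =>
    fpow' i * FreeSemigroup.of true * fpow' (D - i) with hw
  have images : ∀ i : Fin (D + 1), ∃ c : k, c ^ D = 1 ∧
      ((f (w i) : PolyComp k)).toPoly = C c * X ^ (m * n ^ (D + 2)) := by
    rintro ⟨i, hi⟩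
    obtain ⟨c₁, hc₁, hp₁⟩ := key i
    obtain ⟨c₂, hc₂, hp₂⟩ := key (D - i)
    have hexp : n ^ (i + 1) * m * n ^ (D - i + 1) = m * n ^ (D + 2) := by
      have h3 : i + 1 + (D - i + 1) = D + 2 := by omega
      rw [mul_comm (n ^ (i + 1)) m, mul_assoc, ← pow_add, h3]
    refine ⟨c₁ * δ ^ (n ^ (i + 1)) * c₂ ^ (n ^ (i + 1) * m), ?_, ?_⟩
    · rw [mul_pow, mul_pow, hc₁, one_mul,
        ← pow_mul, mul_comm (n ^ (i + 1)) D, pow_mul, hδD, one_pow, one_mul,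
        ← pow_mul, mul_comm (n ^ (i + 1) * m) D, pow_mul, hc₂, one_pow]
    · show ((f (fpow' i * FreeSemigroup.of true * fpow' (D - i)) : PolyComp k)).toPoly = _
      rw [map_mul, map_mul, hfv]
      show ((((f (fpow' i) : PolyComp k)).toPoly.comp
        ((v : PolyComp k)).toPoly).comp ((f (fpow' (D - i)) : PolyComp k)).toPoly) = _
      rw [hp₁, hv, hp₂, monomial_comp', monomial_comp', hexp]
  choose c hc1 hc2 using images
  have hcard : Fintype.card ((Polynomial.nthRoots D (1 : k)).toFinset) < Fintype.card (Fin (D + 1)) := by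
    rw [Fintype.card_coe, Fintype.card_fin]
    exact lt_of_le_of_lt (le_trans (Multiset.toFinset_card_le _)
      (by exact_mod_cast Polynomial.card_nthRoots D (1 : k))) (Nat.lt_succ_self D)
  obtain ⟨i, j, hij, hgij⟩ := Fintype.exists_ne_map_eq_of_card_lt
    (fun i : Fin (D + 1) => (⟨c i, by
      rw [Multiset.mem_toFinset, Polynomial.mem_nthRoots hDpos]; exact hc1 i⟩ :
      (Polynomial.nthRoots D (1 : k)).toFinset)) hcard
  have hcij : c i = c j := congrArg Subtype.val hgij
  have hpij : ((f (w i) : PolyComp k)).toPoly = ((f (w j) : PolyComp k)).toPoly := by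
    rw [hc2 i, hc2 j, hcij]
  have hfij : f (w i) = f (w j) := Subtype.ext hpij
  have hwij : w i = w j := hf hfij
  apply hij
  have hi' : (i : ℕ) = (j : ℕ) := by
    have := congrArg FreeSemigroup.tail hwij
    simp only [hw, fpow'_eq] at this
    simp only [FreeSemigroup.tail_mul] at this
    apply repl_inj' i j _ _
    simpa using this
  exact Fin.ext hi'
end

section
/- Every subsemigroup of Z^U is right reversible: for any two elements F₁, F₂ of a subsemigroup S of Z^U, there exist X, Y ∈ S with X ∘ F₁ = Y ∘ F₂. -/
open Polynomial

section Aux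

variable {k : Type*} [Field k]

lemma comp_mono (a b : k) (d e : ℕ) :
    (C a * X ^ d).comp (C b * X ^ e) = C (a * b ^ d) * X ^ (e * d) := by
  rw [mul_comp, C_comp, X_pow_comp, mul_pow, ← C_pow, ← pow_mul, ← mul_assoc, ← C_mul]

/-- `compPow p a` is the `a`-fold composition of `p` with itself (with `compPow p 0 = X`). -/
noncomputable def compPow (p : Polynomial k) : ℕ → Polynomial k
  | 0 => X
  | a + 1 => p.comp (compPow p a)

/-- `sigN N a = 1 + N + N^2 + ... + N^(a-1)`. -/
def sigN (N : ℕ) : ℕ → ℕ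
  | 0 => 0
  | a + 1 => 1 + N * sigN N a

lemma sigN_succ' (N a : ℕ) : sigN N (a + 1) = sigN N a + N ^ a := by
  induction a with
  | zero => simp [sigN]
  | succ a ih =>
      show 1 + N * sigN N (a + 1) = (1 + N * sigN N a) + N ^ (a + 1)
      rw [ih]; ring

lemma sigN_add (N x y : ℕ) : sigN N (x + y) = sigN N x + N ^ x * sigN N y := by
  induction x with
  | zero => simp [sigN]
  | succ x ih =>
      have h : x + 1 + y = (x + y) + 1 := by ring
      rw [h]
      show 1 + N * sigN N (x + y) = (1 + N * sigN N x) + N ^ (x + 1) * sigN N y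
      rw [ih]; ring

lemma compPow_spec (c : k) (N a : ℕ) :
    compPow (C c * X ^ N) a = C (c ^ sigN N a) * X ^ (N ^ a) := by
  induction a with
  | zero => simp [compPow, sigN]
  | succ a ih =>
      show (C c * X ^ N).comp (compPow (C c * X ^ N) a) = _
      rw [ih, comp_mono]
      have h1 : c * (c ^ sigN N a) ^ N = c ^ sigN N (a + 1) := by
        show c * (c ^ sigN N a) ^ N = c ^ (1 + N * sigN N a)
        rw [← pow_mul, pow_add, pow_one, mul_comm (sigN N a) N]
      have h2 : N ^ a * N = N ^ (a + 1) := by rw [pow_succ]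
      rw [h1, h2]

lemma compPow_succ' (p : Polynomial k) (a : ℕ) :
    (compPow p a).comp p = compPow p (a + 1) := by
  induction a with
  | zero =>
      show Polynomial.X.comp p = p.comp Polynomial.X
      rw [X_comp, comp_X]
  | succ a ih =>
      show (p.comp (compPow p a)).comp p = p.comp (compPow p (a + 1))
      rw [comp_assoc, ih]

lemma of_comp_mem (S : Subsemigroup (PolyComp k)) {p q : Polynomial k}
    (hp : PolyComp.of p ∈ S) (hq : PolyComp.of q ∈ S) : PolyComp.of (p.comp q) ∈ S :=
  mul_mem hp hq

lemma compPow_comp_mem (S : Subsemigroup (PolyComp k)) {p q : Polynomial k}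
    (hp : PolyComp.of p ∈ S) (hq : PolyComp.of q ∈ S) (a : ℕ) :
    PolyComp.of ((compPow p a).comp q) ∈ S := by
  induction a with
  | zero =>
      show PolyComp.of (Polynomial.X.comp q) ∈ S
      rw [X_comp]; exact hq
  | succ a ih =>
      show PolyComp.of ((p.comp (compPow p a)).comp q) ∈ S
      rw [comp_assoc]
      exact of_comp_mem S hp ih

lemma pow_mul_pow_eq (c c' : k) {M : ℕ} (hc : c ^ M = 1) (hc' : c' ^ M = 1)
    {E₁ E₂ u v : ℕ} (huv : u % M = v % M) (hE : E₁ + u = E₂ + v) :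
    c ^ E₁ * c' ^ u = c ^ E₂ * c' ^ v := by
  have h2 : u ≡ v [MOD M] := huv
  have h3 : E₁ + u ≡ E₂ + v [MOD M] := by rw [hE]
  have h1 : E₁ % M = E₂ % M := Nat.ModEq.add_right_cancel h2 h3
  rw [pow_eq_pow_mod E₁ hc, pow_eq_pow_mod E₂ hc, pow_eq_pow_mod u hc',
    pow_eq_pow_mod v hc', h1, huv]

end Aux

/-- Every subsemigroup `S` of `Z^U` is right reversible: for all `F₁, F₂ ∈ S` there exist
`X, Y ∈ S` with `X ∘ F₁ = Y ∘ F₂`. -/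
theorem right_reversible_of_le_ZU {k : Type*} [Field k] [CharZero k]
    (S : Subsemigroup (PolyComp k)) (hS : S ≤ ZU k) :
    ∀ F₁ F₂ : S, ∃ X Y : S, X * F₁ = Y * F₂ := by
  intro F₁ F₂
  obtain ⟨ω, n, ⟨M₁, hM₁, hω⟩, hn, hF₁⟩ := hS F₁.2
  obtain ⟨δ, m, ⟨M₂, hM₂, hδ⟩, hm, hF₂⟩ := hS F₂.2
  set M : ℕ := M₁ * M₂ with hMdef
  have hM0 : 0 < M := Nat.mul_pos hM₁ hM₂
  set N : ℕ := n * m with hNdef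
  set c : k := δ * ω ^ m with hcdef
  set c' : k := ω * δ ^ n with hc'def
  have hωM : ω ^ M = 1 := by rw [hMdef, pow_mul, hω, one_pow]
  have hδM : δ ^ M = 1 := by rw [hMdef, Nat.mul_comm M₁ M₂, pow_mul, hδ, one_pow]
  have hc : c ^ M = 1 := by
    rw [hcdef, mul_pow, hδM, one_mul, ← pow_mul, mul_comm m M, pow_mul, hωM, one_pow]
  have hc' : c' ^ M = 1 := by
    rw [hc'def, mul_pow, hωM, one_mul, ← pow_mul, mul_comm n M, pow_mul, hδM, one_pow]
  have hF1mem : PolyComp.of (C ω * X ^ n) ∈ S := by rw [← hF₁]; exact F₁.2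
  have hF2mem : PolyComp.of (C δ * X ^ m) ∈ S := by rw [← hF₂]; exact F₂.2
  have hGmem : PolyComp.of (C c * X ^ N) ∈ S := by
    have h := of_comp_mem S hF2mem hF1mem
    rw [comp_mono] at h
    exact h
  have hHmem : PolyComp.of (C c' * X ^ N) ∈ S := by
    have h := of_comp_mem S hF1mem hF2mem
    rw [comp_mono, Nat.mul_comm m n] at h
    exact h
  -- pigeonhole: find a < b with N^a ≡ N^b (mod M)
  obtain ⟨x, y, hxy, hfxy⟩ := Finite.exists_ne_map_eq_of_infinite
    (fun t : ℕ => (⟨N ^ t % M, Nat.mod_lt _ hM0⟩ : Fin M))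
  obtain ⟨a, b, hab, hNab⟩ : ∃ a b : ℕ, a < b ∧ N ^ a % M = N ^ b % M := by
    rcases lt_or_gt_of_ne hxy with h | h
    · exact ⟨x, y, h, congrArg Fin.val hfxy⟩
    · exact ⟨y, x, h, (congrArg Fin.val hfxy).symm⟩
  obtain ⟨Q, hQ⟩ : ∃ Q, b = a + Q + 1 := ⟨b - a - 1, by omega⟩
  rw [hQ] at hNab
  -- witnesses
  set Xw : Polynomial k := (compPow (C c * X ^ N) a).comp
    ((C c' * X ^ N).comp ((compPow (C c * X ^ N) Q).comp (C δ * X ^ m))) with hXw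
  set Yw : Polynomial k := (compPow (C c * X ^ N) (a + Q + 1)).comp (C ω * X ^ n) with hYw
  have hXmem : PolyComp.of Xw ∈ S :=
    compPow_comp_mem S hGmem
      (of_comp_mem S hHmem (compPow_comp_mem S hGmem hF2mem Q)) a
  have hYmem : PolyComp.of Yw ∈ S := compPow_comp_mem S hGmem hF1mem (a + Q + 1)
  refine ⟨⟨PolyComp.of Xw, hXmem⟩, ⟨PolyComp.of Yw, hYmem⟩, ?_⟩
  apply Subtype.ext
  show PolyComp.of (Xw.comp (F₁ : PolyComp k).toPoly)
      = PolyComp.of (Yw.comp (F₂ : PolyComp k).toPoly)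
  rw [hF₁, hF₂]
  show Xw.comp (C ω * X ^ n) = Yw.comp (C δ * X ^ m)
  have key1 : Xw.comp (C ω * X ^ n)
      = (compPow (C c * X ^ N) a).comp
          ((C c' * X ^ N).comp (compPow (C c * X ^ N) (Q + 1))) := by
    rw [hXw, comp_assoc, comp_assoc, comp_assoc, comp_mono, ← hcdef, ← hNdef, compPow_succ']
  have key2 : Yw.comp (C δ * X ^ m)
      = (compPow (C c * X ^ N) (a + Q + 1)).comp (C c' * X ^ N) := by
    rw [hYw, comp_assoc, comp_mono, Nat.mul_comm m n, ← hc'def, ← hNdef]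
  rw [key1, key2, compPow_spec, compPow_spec, compPow_spec, comp_mono, comp_mono, comp_mono]
  have hCoef : c ^ sigN N a * (c' * (c ^ sigN N (Q + 1)) ^ N) ^ N ^ a
      = c ^ sigN N (a + Q + 1) * c' ^ N ^ (a + Q + 1) := by
    have expand : c ^ sigN N a * (c' * (c ^ sigN N (Q + 1)) ^ N) ^ N ^ a
        = c ^ (sigN N a + sigN N (Q + 1) * N * N ^ a) * c' ^ N ^ a := by
      ring_nf
    rw [expand]
    refine pow_mul_pow_eq c c' hc hc' hNab ?_
    -- (sigN N a + sigN N (Q+1) * N * N^a) + N^a = sigN N (a+Q+1) + N^(a+Q+1)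
    have hkey : 1 + N * sigN N (Q + 1) = sigN N (Q + 1) + N ^ (Q + 1) := by
      have h1 : sigN N (Q + 1 + 1) = 1 + N * sigN N (Q + 1) := rfl
      rw [← h1, sigN_succ']
    have hadd : sigN N (a + Q + 1) = sigN N a + N ^ a * sigN N (Q + 1) := by
      have : a + Q + 1 = a + (Q + 1) := by ring
      rw [this, sigN_add]
    rw [hadd]
    have hstep : sigN N a + sigN N (Q + 1) * N * N ^ a + N ^ a
        = sigN N a + N ^ a * (1 + N * sigN N (Q + 1)) := by ring
    rw [hstep, hkey]
    have : a + Q + 1 = a + (Q + 1) := by ring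
    rw [this, pow_add]
    ring
  have hDeg : N ^ (Q + 1) * N * N ^ a = N * N ^ (a + Q + 1) := by
    have : a + Q + 1 = a + (Q + 1) := by ring
    rw [this, pow_add]
    ring
  rw [hCoef, hDeg]
end

section
/- If U and T are right amenable semigroups with a semigroup homomorphism ρ: T → End(U), then the semidirect product F = U ×_ρ T with operation (u,a)(v,b) = (u·ρ_a(v), ab) is right amenable. -/
/-!
Let `μ` and `ν` be right-invariant finitely additive probability measures on `U` and `T`. The
measure on `U ×_ρ T` is `P ↦ ∫ μ(P_t) dν(t)`, where `P_t = {u | (u, t) ∈ P}`. The fibre over `t` of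
the right translate `P(v, b)⁻¹` is the right translate of `P_{tb}` by `ρ_t(v)`, so invariance of
`μ` reduces invariance of the new measure to invariance of `ν` under `t ↦ tb`.

Since `ν` is only finitely additive, `∫ f dν` for `0 ≤ f ≤ 1` is taken to be the supremum of the
lower sums `(1/n) ∑_{k<n} ν{f ≥ (k+1)/n}`, i.e. of the integrals of the step functions `⌊n f⌋₊ / n`.
Integration of `ℕ`-valued step functions is monotone and additive, so the floor inequalities
`n ⌊m f⌋₊ ≤ m ⌊n f⌋₊ + m` and `⌊n f⌋₊ + ⌊n g⌋₊ ≤ ⌊n (f + g)⌋₊ ≤ ⌊n f⌋₊ + ⌊n g⌋₊ + 1` say that no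
lower sum exceeds the one of mesh `1/n` by more than `1/n` and that lower sums are additive up to
`1/n`. Hence the supremum is additive.
-/

open Finset

section Floor

variable {R : Type*} [Field R] [LinearOrder R] [IsStrictOrderedRing R] [FloorSemiring R]

theorem Nat.floor_natCast_mul_le_self {x : R} (hx : x ≤ 1) (n : ℕ) : ⌊n * x⌋₊ ≤ n :=
  Nat.floor_le_of_le (mul_le_of_le_one_right n.cast_nonneg hx)

theorem Nat.le_floor_add {x y : R} (hx : 0 ≤ x) (hy : 0 ≤ y) : ⌊x⌋₊ + ⌊y⌋₊ ≤ ⌊x + y⌋₊ :=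
  Nat.le_floor <| by push_cast; linarith [Nat.floor_le hx, Nat.floor_le hy]

theorem Nat.floor_add_le_add_one {x y : R} (hx : 0 ≤ x) (hy : 0 ≤ y) :
    ⌊x + y⌋₊ ≤ ⌊x⌋₊ + ⌊y⌋₊ + 1 :=
  Nat.lt_succ_iff.1 <| (Nat.floor_lt (by positivity)).2 <| by
    push_cast; linarith [Nat.lt_floor_add_one x, Nat.lt_floor_add_one y]

end Floor

theorem le_of_forall_le_add_div {a b c : ℝ} (h : ∀ n : ℕ, 0 < n → a ≤ b + c / n) : a ≤ b :=
  ge_of_tendsto (by simpa using tendsto_const_nhds.add (tendsto_const_div_atTop_nhds_zero_nat c))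
    ((Filter.eventually_gt_atTop 0).mono h)

structure IsFinitelyAdditive {α : Type*} (μ : Set α → ℝ) : Prop where
  union_eq : ∀ A B : Set α, Disjoint A B → μ (A ∪ B) = μ A + μ B

structure IsFinitelyAdditiveProb {α : Type*} (μ : Set α → ℝ) : Prop
    extends IsFinitelyAdditive μ where
  nonneg : ∀ A : Set α, 0 ≤ μ A
  univ_eq_one : μ Set.univ = 1

namespace IsFinitelyAdditive

variable {α : Type*} {μ : Set α → ℝ}

theorem empty_eq_zero (hμ : IsFinitelyAdditive μ) : μ ∅ = 0 := by
  have h := hμ.union_eq ∅ ∅ disjoint_bot_left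
  rw [Set.union_empty] at h
  linarith

theorem mono (hμ : IsFinitelyAdditive μ) (hnn : ∀ A, 0 ≤ μ A) {A B : Set α} (hAB : A ⊆ B) :
    μ A ≤ μ B := by
  have h := hμ.union_eq A (B \ A) Set.disjoint_sdiff_right
  rw [Set.union_sdiff_cancel hAB] at h
  linarith [hnn (B \ A)]

end IsFinitelyAdditive

theorem IsFinitelyAdditiveProb.le_one {α : Type*} {μ : Set α → ℝ} (hμ : IsFinitelyAdditiveProb μ)
    (A : Set α) : μ A ≤ 1 :=
  hμ.univ_eq_one ▸ hμ.mono hμ.nonneg (Set.subset_univ A)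

namespace FinitelyAdditive

variable {α : Type*} {μ : Set α → ℝ}

/-- The integral of `h` against `μ` in layer-cake form, provided `h ≤ N`. -/
def layerSum (μ : Set α → ℝ) (N : ℕ) (h : α → ℕ) : ℝ :=
  ∑ k ∈ range N, μ {t | k < h t}

theorem layerSum_zero (hμ : IsFinitelyAdditive μ) (N : ℕ) : layerSum μ N 0 = 0 := by
  simp [layerSum, hμ.empty_eq_zero]

theorem layerSum_of_le (hμ : IsFinitelyAdditive μ) {N M : ℕ} {h : α → ℕ} (hNM : N ≤ M)
    (hh : ∀ t, h t ≤ N) : layerSum μ M h = layerSum μ N h := by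
  obtain ⟨d, rfl⟩ := Nat.exists_eq_add_of_le hNM
  have hempty : ∀ k, {t | N + k < h t} = ∅ := fun k =>
    Set.eq_empty_of_forall_notMem fun t ht => by
      have := hh t
      simp only [Set.mem_ofPred_eq] at ht
      omega
  simp [layerSum, sum_range_add, hempty, hμ.empty_eq_zero]

theorem layerSum_mono (hμ : IsFinitelyAdditive μ) (hnn : ∀ A, 0 ≤ μ A) (N : ℕ) {h₁ h₂ : α → ℕ}
    (hle : ∀ t, h₁ t ≤ h₂ t) : layerSum μ N h₁ ≤ layerSum μ N h₂ :=
  sum_le_sum fun _ _ => hμ.mono hnn fun t ht => lt_of_lt_of_le ht (hle t)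

theorem layerSum_const (hμ : IsFinitelyAdditive μ) {N c : ℕ} (hc : c ≤ N) :
    layerSum μ N (fun _ => c) = c * μ Set.univ := by
  rw [layerSum_of_le hμ hc fun _ => le_rfl, layerSum]
  have hlevel : ∀ k ∈ range c, μ {_t : α | k < c} = μ Set.univ := fun k hk =>
    congrArg μ (Set.eq_univ_of_forall fun _ => mem_range.1 hk)
  rw [sum_congr rfl hlevel, sum_const, card_range, nsmul_eq_mul]

theorem layerSum_comp {β : Type*} {ν : Set β → ℝ} {φ : β → α} (hφ : ∀ A, ν (φ ⁻¹' A) = μ A)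
    (N : ℕ) (h : α → ℕ) : layerSum ν N (h ∘ φ) = layerSum μ N h :=
  sum_congr rfl fun k _ => hφ {t | k < h t}

theorem layerSum_add_indicator (hμ : IsFinitelyAdditive μ) {N : ℕ} {h : α → ℕ} {E : Set α}
    (hE : ∀ t ∈ E, h t < N) :
    layerSum μ N (h + E.indicator 1 : α → ℕ) = layerSum μ N h + μ E := by
  have hsplit : ∀ k, μ {t | k < (h + E.indicator 1 : α → ℕ) t} =
      μ {t | k < h t} + μ (E ∩ {t | h t = k}) := by
    intro k
    rw [← hμ.union_eq]
    · congr 1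
      ext t
      by_cases ht : t ∈ E
      · simp only [ht, Set.indicator_of_mem, Pi.add_apply, Pi.one_apply, Set.mem_ofPred_eq,
          Set.mem_union, Set.mem_inter_iff, true_and]
        omega
      · simp [ht]
    · exact Set.disjoint_left.2 fun t h₁ h₂ => by simp_all
  have hpart : ∀ n, ∑ k ∈ range n, μ (E ∩ {t | h t = k}) = μ (E ∩ {t | h t < n}) := by
    intro n
    induction n with
    | zero => simp [hμ.empty_eq_zero]
    | succ n ih =>
      rw [sum_range_succ, ih, ← hμ.union_eq, ← Set.inter_union_distrib_left]
      · congr 2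
        ext t
        simp only [Set.mem_union, Set.mem_ofPred_eq]
        omega
      · exact Set.disjoint_left.2 fun t h₁ h₂ => by simp_all
  have hEN : E ∩ {t | h t < N} = E := Set.inter_eq_left.2 hE
  simp only [layerSum, hsplit, sum_add_distrib, hpart, hEN]

theorem layerSum_add (hμ : IsFinitelyAdditive μ) {N : ℕ} {h₁ h₂ : α → ℕ}
    (hh : ∀ t, h₁ t + h₂ t ≤ N) :
    layerSum μ N (h₁ + h₂) = layerSum μ N h₁ + layerSum μ N h₂ := by
  suffices ∀ M (h₂ : α → ℕ), (∀ t, h₂ t ≤ M) → (∀ t, h₁ t + h₂ t ≤ N) →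
      layerSum μ N (h₁ + h₂) = layerSum μ N h₁ + layerSum μ N h₂ from
    this N h₂ (fun t => (Nat.le_add_left _ _).trans (hh t)) hh
  intro M
  induction M with
  | zero =>
    intro h₂ hM _
    have : h₂ = 0 := funext fun t => Nat.le_zero.1 (hM t)
    simp [this, layerSum_zero hμ]
  | succ M ih =>
    intro h₂ hM hh
    set E := {t | 0 < h₂ t}
    have hdecomp : h₂ = (h₂ - 1) + E.indicator 1 := funext fun t => by
      by_cases ht : t ∈ E
      · simp only [E, Set.mem_ofPred_eq] at ht
        simp only [Pi.add_apply, Pi.sub_apply, Pi.one_apply, Set.mem_ofPred_eq, ht,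
          Set.indicator_of_mem, E]
        omega
      · simp_all [E]
    have hE₂ : ∀ t ∈ E, (h₂ - 1) t < N := fun t ht => by
      have := hh t
      simp only [E, Set.mem_ofPred_eq] at ht
      simp only [Pi.sub_apply, Pi.one_apply]
      omega
    have hE₁₂ : ∀ t ∈ E, (h₁ + (h₂ - 1)) t < N := fun t ht => by
      have := hh t
      simp only [E, Set.mem_ofPred_eq] at ht
      simp only [Pi.add_apply, Pi.sub_apply, Pi.one_apply]
      omega
    rw [hdecomp, ← add_assoc, layerSum_add_indicator hμ hE₁₂, layerSum_add_indicator hμ hE₂,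
      ih _ (fun t => by simp only [Pi.sub_apply, Pi.one_apply]; have := hM t; omega)
        (fun t => by simp only [Pi.sub_apply, Pi.one_apply]; have := hh t; omega)]
    ring

theorem layerSum_nsmul (hμ : IsFinitelyAdditive μ) {N : ℕ} (q : ℕ) {h : α → ℕ}
    (hh : ∀ t, q * h t ≤ N) : layerSum μ N (q • h) = q * layerSum μ N h := by
  induction q with
  | zero => simp [layerSum_zero hμ]
  | succ q ih =>
    have hq : ∀ t, (q • h) t + h t ≤ N := fun t => (Nat.succ_mul q (h t)).symm ▸ hh t
    rw [succ_nsmul, layerSum_add hμ hq, ih fun t => (Nat.le_add_right _ _).trans (hq t)]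
    push_cast
    ring

theorem layerSum_le_of_nsmul_le (hμ : IsFinitelyAdditiveProb μ) {a b : α → ℕ} {A B p q c : ℕ}
    (ha : ∀ t, a t ≤ A) (hb : ∀ t, b t ≤ B) (hab : ∀ t, p * a t ≤ q * b t + c) :
    p * layerSum μ A a ≤ q * layerSum μ B b + c := by
  set K := A + B + p * A + q * B + c
  have hpa : ∀ t, p * a t ≤ K := fun t => by have := Nat.mul_le_mul_left p (ha t); omega
  have hqb : ∀ t, q * b t + c ≤ K := fun t => by have := Nat.mul_le_mul_left q (hb t); omega
  calc p * layerSum μ A a = layerSum μ K (p • a) := by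
        rw [layerSum_nsmul hμ.1 p hpa, layerSum_of_le (M := K) hμ.1 (by omega) ha]
    _ ≤ layerSum μ K (q • b + fun _ => c) := layerSum_mono hμ.1 hμ.nonneg K hab
    _ = q * layerSum μ B b + c := by
        rw [layerSum_add (h₁ := q • b) (h₂ := fun _ => c) hμ.1 hqb,
          layerSum_const hμ.1 (by omega), hμ.univ_eq_one, mul_one,
          layerSum_nsmul hμ.1 q fun t => (Nat.le_add_right _ _).trans (hqb t),
          layerSum_of_le (M := K) hμ.1 (by omega) hb]

noncomputable def riemannSum (μ : Set α → ℝ) (n : ℕ) (f : α → ℝ) : ℝ :=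
  layerSum μ n (fun t => ⌊n * f t⌋₊) / n

theorem riemannSum_nonneg (hnn : ∀ A, 0 ≤ μ A) (n : ℕ) (f : α → ℝ) : 0 ≤ riemannSum μ n f :=
  div_nonneg (sum_nonneg fun _ _ => hnn _) n.cast_nonneg

theorem riemannSum_le_add_inv (hμ : IsFinitelyAdditiveProb μ) {f : α → ℝ}
    (hf : ∀ t, f t ∈ Set.Icc (0 : ℝ) 1) {m n : ℕ} (hm : 0 < m) (hn : 0 < n) :
    riemannSum μ m f ≤ riemannSum μ n f + 1 / n := by
  have hfloor : ∀ t, n * ⌊m * f t⌋₊ ≤ m * ⌊n * f t⌋₊ + m := fun t => by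
    have ha : (⌊m * f t⌋₊ : ℝ) ≤ m * f t := Nat.floor_le (by have := (hf t).1; positivity)
    have hb : (n : ℝ) * f t < ⌊n * f t⌋₊ + 1 := Nat.lt_floor_add_one _
    have : (n * ⌊m * f t⌋₊ : ℝ) < m * ⌊n * f t⌋₊ + m := by
      calc (n * ⌊m * f t⌋₊ : ℝ) ≤ n * (m * f t) := by gcongr
        _ = m * (n * f t) := by ring
        _ < m * (⌊n * f t⌋₊ + 1) := by gcongr
        _ = m * ⌊n * f t⌋₊ + m := by ring
    exact_mod_cast this.le
  have key := layerSum_le_of_nsmul_le hμ (fun t => Nat.floor_natCast_mul_le_self (hf t).2 m)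
    (fun t => Nat.floor_natCast_mul_le_self (hf t).2 n) hfloor
  have hm' : (0 : ℝ) < m := by exact_mod_cast hm
  have hn' : (0 : ℝ) < n := by exact_mod_cast hn
  rw [riemannSum, riemannSum, ← add_div, div_le_div_iff₀ hm' hn']
  nlinarith

theorem riemannSum_add_le (hμ : IsFinitelyAdditiveProb μ) {f g : α → ℝ} (hf : ∀ t, 0 ≤ f t)
    (hg : ∀ t, 0 ≤ g t) (hfg : ∀ t, f t + g t ≤ 1) (n : ℕ) :
    riemannSum μ n f + riemannSum μ n g ≤ riemannSum μ n (f + g) := by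
  have hfloor : ∀ t, ⌊n * f t⌋₊ + ⌊n * g t⌋₊ ≤ ⌊n * (f + g) t⌋₊ := fun t => by
    rw [Pi.add_apply, mul_add]
    exact Nat.le_floor_add (by have := hf t; positivity) (by have := hg t; positivity)
  have hsum := layerSum_add hμ.1 (N := n) (h₁ := fun t => ⌊n * f t⌋₊) (h₂ := fun t => ⌊n * g t⌋₊)
    fun t => (hfloor t).trans (Nat.floor_natCast_mul_le_self (hfg t) n)
  rw [riemannSum, riemannSum, riemannSum, ← add_div, ← hsum]
  exact div_le_div_of_nonneg_right (layerSum_mono hμ.1 hμ.nonneg n hfloor) n.cast_nonneg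

theorem riemannSum_add_le_add_inv (hμ : IsFinitelyAdditiveProb μ) {f g : α → ℝ}
    (hf : ∀ t, 0 ≤ f t) (hg : ∀ t, 0 ≤ g t) (hfg : ∀ t, f t + g t ≤ 1) {n : ℕ} (hn : 0 < n) :
    riemannSum μ n (f + g) ≤ riemannSum μ n f + riemannSum μ n g + 1 / n := by
  have hfloor : ∀ t, 1 * ⌊n * (f + g) t⌋₊ ≤ 1 * (⌊n * f t⌋₊ + ⌊n * g t⌋₊) + 1 := fun t => by
    rw [Pi.add_apply, mul_add, one_mul, one_mul]
    exact Nat.floor_add_le_add_one (by have := hf t; positivity) (by have := hg t; positivity)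
  have hbound : ∀ t, ⌊n * f t⌋₊ + ⌊n * g t⌋₊ ≤ n := fun t =>
    (Nat.le_floor_add (by have := hf t; positivity) (by have := hg t; positivity)).trans
      (by rw [← mul_add]; exact Nat.floor_natCast_mul_le_self (hfg t) n)
  have key := layerSum_le_of_nsmul_le hμ
    (fun t => Nat.floor_natCast_mul_le_self (hfg t) n) hbound hfloor
  have hsplit : layerSum μ n (fun t => ⌊n * f t⌋₊ + ⌊n * g t⌋₊) =
      layerSum μ n (fun t => ⌊n * f t⌋₊) + layerSum μ n (fun t => ⌊n * g t⌋₊) :=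
    layerSum_add hμ.1 hbound
  rw [Nat.cast_one, one_mul, one_mul, hsplit] at key
  rw [riemannSum, riemannSum, riemannSum, ← add_div, ← add_div, div_le_div_iff_of_pos_right
    (by exact_mod_cast hn)]
  exact key

noncomputable def integral (μ : Set α → ℝ) (f : α → ℝ) : ℝ :=
  ⨆ n : ℕ, riemannSum μ (n + 1) f

theorem bddAbove_riemannSum (hμ : IsFinitelyAdditiveProb μ) {f : α → ℝ}
    (hf : ∀ t, f t ∈ Set.Icc (0 : ℝ) 1) :
    BddAbove (Set.range fun n : ℕ => riemannSum μ (n + 1) f) :=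
  ⟨riemannSum μ 1 f + 1, Set.forall_mem_range.2 fun n => by
    simpa using riemannSum_le_add_inv hμ hf n.succ_pos one_pos⟩

theorem riemannSum_le_integral (hμ : IsFinitelyAdditiveProb μ) {f : α → ℝ}
    (hf : ∀ t, f t ∈ Set.Icc (0 : ℝ) 1) {n : ℕ} (hn : 0 < n) : riemannSum μ n f ≤ integral μ f := by
  obtain ⟨m, rfl⟩ := Nat.exists_eq_add_one_of_ne_zero hn.ne'
  exact le_ciSup (bddAbove_riemannSum hμ hf) m

theorem integral_le_riemannSum_add_inv (hμ : IsFinitelyAdditiveProb μ) {f : α → ℝ}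
    (hf : ∀ t, f t ∈ Set.Icc (0 : ℝ) 1) {n : ℕ} (hn : 0 < n) :
    integral μ f ≤ riemannSum μ n f + 1 / n :=
  ciSup_le fun m => riemannSum_le_add_inv hμ hf m.succ_pos hn

theorem integral_nonneg (hμ : IsFinitelyAdditiveProb μ) {f : α → ℝ}
    (hf : ∀ t, f t ∈ Set.Icc (0 : ℝ) 1) : 0 ≤ integral μ f :=
  (riemannSum_nonneg hμ.nonneg 1 f).trans (riemannSum_le_integral hμ hf one_pos)

theorem integral_const_one (hμ : IsFinitelyAdditiveProb μ) : integral μ (fun _ : α => 1) = 1 := by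
  have hone : ∀ n : ℕ, riemannSum μ (n + 1) (fun _ : α => 1) = 1 := fun n => by
    have hn : ((n + 1 : ℕ) : ℝ) ≠ 0 := by positivity
    simp only [riemannSum, mul_one, Nat.floor_natCast]
    rw [layerSum_const hμ.1 le_rfl, hμ.univ_eq_one, mul_one, div_self hn]
  simp only [integral, hone, ciSup_const]

theorem integral_add (hμ : IsFinitelyAdditiveProb μ) {f g : α → ℝ} (hf : ∀ t, 0 ≤ f t)
    (hg : ∀ t, 0 ≤ g t) (hfg : ∀ t, f t + g t ≤ 1) :
    integral μ (f + g) = integral μ f + integral μ g := by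
  have hf' : ∀ t, f t ∈ Set.Icc (0 : ℝ) 1 := fun t => ⟨hf t, by linarith [hg t, hfg t]⟩
  have hg' : ∀ t, g t ∈ Set.Icc (0 : ℝ) 1 := fun t => ⟨hg t, by linarith [hf t, hfg t]⟩
  have hfg' : ∀ t, (f + g) t ∈ Set.Icc (0 : ℝ) 1 := fun t => ⟨add_nonneg (hf t) (hg t), hfg t⟩
  apply le_antisymm
  · refine le_of_forall_le_add_div (c := 2) fun n hn => ?_
    have := riemannSum_add_le_add_inv hμ hf hg hfg hn
    have := integral_le_riemannSum_add_inv hμ hfg' hn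
    have := riemannSum_le_integral hμ hf' hn
    have := riemannSum_le_integral hμ hg' hn
    linarith [add_div (1 : ℝ) 1 n]
  · refine le_of_forall_le_add_div (c := 2) fun n hn => ?_
    have := riemannSum_add_le hμ hf hg hfg n
    have := integral_le_riemannSum_add_inv hμ hf' hn
    have := integral_le_riemannSum_add_inv hμ hg' hn
    have := riemannSum_le_integral hμ hfg' hn
    linarith [add_div (1 : ℝ) 1 n]

theorem integral_comp {β : Type*} {ν : Set β → ℝ} {φ : β → α} (hφ : ∀ A, ν (φ ⁻¹' A) = μ A)
    (f : α → ℝ) : integral ν (f ∘ φ) = integral μ f := by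
  simp only [integral, riemannSum]
  congr 1
  funext n
  exact congrArg (· / _) (layerSum_comp hφ (n + 1) fun t => ⌊(n + 1 : ℕ) * f t⌋₊)

end FinitelyAdditive

open FinitelyAdditive in
theorem IsFinitelyAdditiveProb.prod {α β : Type*} {μ : Set α → ℝ} {ν : Set β → ℝ}
    (hμ : IsFinitelyAdditiveProb μ) (hν : IsFinitelyAdditiveProb ν) :
    IsFinitelyAdditiveProb fun P : Set (α × β) => integral ν fun t => μ {u | (u, t) ∈ P} where
  univ_eq_one := by simpa [hμ.univ_eq_one] using integral_const_one hν
  nonneg _ := integral_nonneg hν fun _ => ⟨hμ.nonneg _, hμ.le_one _⟩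
  union_eq P₁ P₂ hP := by
    have hfiber : ∀ t, Disjoint {u | (u, t) ∈ P₁} {u | (u, t) ∈ P₂} := fun t =>
      Set.disjoint_left.2 fun _ h₁ h₂ => Set.disjoint_left.1 hP h₁ h₂
    have hsum : (fun t => μ {u | (u, t) ∈ P₁ ∪ P₂}) =
        (fun t => μ {u | (u, t) ∈ P₁}) + fun t => μ {u | (u, t) ∈ P₂} :=
      funext fun t => hμ.union_eq _ _ (hfiber t)
    rw [hsum]
    exact integral_add hν (fun _ => hμ.nonneg _) (fun _ => hμ.nonneg _)
      fun t => (hμ.union_eq _ _ (hfiber t)).symm.trans_le (hμ.le_one _)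

theorem rightAmenable_iff {S : Type*} [Mul S] :
    RightAmenable S ↔
      ∃ μ : Set S → ℝ, IsFinitelyAdditiveProb μ ∧ ∀ (a : S) (T : Set S), μ {s | s * a ∈ T} = μ T :=
  ⟨fun ⟨μ, h₁, h₂, h₃, h₄⟩ => ⟨μ, ⟨⟨h₃⟩, h₂, h₁⟩, h₄⟩,
    fun ⟨μ, ⟨⟨h₃⟩, h₂, h₁⟩, h₄⟩ => ⟨μ, h₁, h₂, h₃, h₄⟩⟩

theorem rightAmenable_semidirect_general {U T : Type*} [Semigroup U] [Semigroup T]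
    (ρ : T → (U →ₙ* U))
    (hU : RightAmenable U) (hT : RightAmenable T) :
    @RightAmenable (U × T) ⟨fun p q => (p.1 * ρ p.2 q.1, p.2 * q.2)⟩ := by
  let _ : Mul (U × T) := ⟨fun p q => (p.1 * ρ p.2 q.1, p.2 * q.2)⟩
  obtain ⟨μ, hμ, hμinv⟩ := rightAmenable_iff.1 hU
  obtain ⟨ν, hν, hνinv⟩ := rightAmenable_iff.1 hT
  refine rightAmenable_iff.2 ⟨_, hμ.prod hν, fun ⟨v, b⟩ P => ?_⟩
  have hfiber : ∀ t, μ {u | (u * ρ t v, t * b) ∈ P} = μ {u | (u, t * b) ∈ P} := fun t =>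
    hμinv (ρ t v) {u | (u, t * b) ∈ P}
  exact (congrArg (FinitelyAdditive.integral ν) (funext hfiber)).trans
    (FinitelyAdditive.integral_comp (hνinv b) fun t => μ {u | (u, t) ∈ P})

/-- If `U` and `T` are right amenable semigroups and `ρ : T → End(U)` is a homomorphism of
semigroups, then the semidirect product `U ×_ρ T`, with operation
`(u, a)(v, b) = (u · ρ_a(v), ab)`, is right amenable. -/
theorem rightAmenable_semidirect {U T : Type*} [Semigroup U] [Semigroup T]
    (ρ : T → (U →ₙ* U)) (hρ : ∀ a b : T, ρ (a * b) = (ρ a).comp (ρ b))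
    (hU : RightAmenable U) (hT : RightAmenable T) :
    @RightAmenable (U × T) ⟨fun p q => (p.1 * ρ p.2 q.1, p.2 * q.2)⟩ :=
  rightAmenable_semidirect_general ρ hU hT
end

section
/- Let S be a right reversible semigroup, and define x ∼ y if and only if there exists s ∈ S with sx = sy. Then ∼ is a congruence on S and the quotient semigroup S/∼ is left cancellative. -/
/-- Let `S` be a right reversible semigroup and define `x ∼ y` iff `sx = sy` for some `s ∈ S`.
Then `∼` is a congruence on `S` (an equivalence relation compatible with multiplication), and
the quotient semigroup `S/∼` is left cancellative (i.e. `[a][b] = [a][c]` implies `[b] = [c]`). -/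
theorem congruence_and_left_cancellative_quotient {S : Type*} [Semigroup S]
    (hrev : ∀ a b : S, ∃ x y : S, x * a = y * b) :
    Equivalence (fun x y : S => ∃ s : S, s * x = s * y) ∧
    (∀ x y x' y' : S, (∃ s : S, s * x = s * y) → (∃ s : S, s * x' = s * y') →
      ∃ s : S, s * (x * x') = s * (y * y')) ∧
    (∀ a b c : S, (∃ s : S, s * (a * b) = s * (a * c)) → ∃ s : S, s * b = s * c) := by
  refine ⟨⟨fun x => ⟨x, rfl⟩, fun ⟨s, h⟩ => ⟨s, h.symm⟩, ?_⟩, ?_, ?_⟩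
  · rintro x y z ⟨s, hs⟩ ⟨t, ht⟩
    obtain ⟨u, v, huv⟩ := hrev s t
    exact ⟨u * s, by
      calc u * s * x = u * (s * x) := mul_assoc ..
        _ = u * (s * y) := by rw [hs]
        _ = v * t * y := by rw [← mul_assoc, huv]
        _ = v * (t * z) := by rw [mul_assoc, ht]
        _ = u * s * z := by rw [← mul_assoc, ← huv]⟩
  · rintro x y x' y' ⟨s, hs⟩ ⟨t, ht⟩
    obtain ⟨p, q, hpq⟩ := hrev (s * y) t
    refine ⟨p * s, ?_⟩
    calc p * s * (x * x') = p * (s * x) * x' := by simp [mul_assoc]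
      _ = p * (s * y) * x' := by rw [hs]
      _ = q * t * x' := by rw [hpq]
      _ = q * (t * x') := mul_assoc ..
      _ = q * (t * y') := by rw [ht]
      _ = p * (s * y) * y' := by rw [← mul_assoc, ← hpq]
      _ = p * s * (y * y') := by simp [mul_assoc]
  · rintro a b c ⟨s, hs⟩
    exact ⟨s * a, by rwa [mul_assoc, mul_assoc]⟩
end

section
/- Let U be a subgroup of roots of unity in a field k of characteristic zero, and N a subsemigroup of the multiplicative semigroup ℕ\{1}, such that no prime dividing the order of any element of U divides any element of N. Then the semidirect product semigroup U ×_ρ N with operation (u,n)(v,m) = (u·v^n, nm) is left cancellative. -/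
/-- Let `U` be a subgroup of roots of unity in a field `k` of characteristic zero and `N` a
subsemigroup of the multiplicative semigroup `ℕ \ {1}`, such that no prime dividing the order of
an element of `U` divides an element of `N`. Then the semidirect product `U ×_ρ N`, with
operation `(u, n)(v, m) = (u·v^n, nm)`, is left cancellative: `(u, n)(v, m) = (u, n)(w, l)`
implies `(v, m) = (w, l)`. -/
theorem semidirect_left_cancellative {k : Type*} [Field k] [CharZero k]
    (U : Subgroup kˣ) (hU : ∀ u ∈ U, ∃ m : ℕ, 0 < m ∧ u ^ m = 1)
    (N : Subsemigroup ℕ) (hN : ∀ n ∈ N, 2 ≤ n)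
    (hdisj : ∀ p : ℕ, p.Prime → (∃ u ∈ U, p ∣ orderOf u) → ∀ n ∈ N, ¬ p ∣ n) :
    ∀ u ∈ U, ∀ n ∈ N, ∀ v ∈ U, ∀ m ∈ N, ∀ w ∈ U, ∀ l ∈ N,
      u * v ^ n = u * w ^ n → n * m = n * l → v = w ∧ m = l := by
  intro u hu n hn v hv m hm w hw l hl h1 h2
  have hn2 : 2 ≤ n := hN n hn
  have hml : m = l := Nat.eq_of_mul_eq_mul_left (by omega) h2
  refine ⟨?_, hml⟩
  have h3 : v ^ n = w ^ n := mul_left_cancel h1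
  set z : kˣ := v * w⁻¹ with hz
  have hzU : z ∈ U := U.mul_mem hv (U.inv_mem hw)
  have hzn : z ^ n = 1 := by
    rw [hz, mul_pow, h3, ← mul_pow, mul_inv_cancel, one_pow]
  have hord : orderOf z ∣ n := orderOf_dvd_of_pow_eq_one hzn
  have hone : orderOf z = 1 := by
    by_contra hne
    obtain ⟨p, hp, hpd⟩ := Nat.exists_prime_and_dvd hne
    exact hdisj p hp ⟨z, hzU, hpd⟩ n hn (hpd.trans hord)
  have : z = 1 := orderOf_eq_one_iff.mp hone
  rwa [hz, mul_inv_eq_one] at this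
end

section
/- Every subsemigroup of Z^U is right amenable, where Z^U is the semigroup under composition of monomials ωz^n with ω a root of unity and n ≥ 2, over an algebraically closed field k of characteristic zero. -/
open Polynomial

open Filter Topology Pointwise in
/-- A countable semigroup with injective right translations satisfying a right Følner condition
is right amenable. -/
theorem rightAmenable_of_folner {X : Type*} [Mul X] [Countable X] [Nonempty X]
    [DecidableEq X]
    (hinj : ∀ a : X, Function.Injective (fun s => s * a))
    (hFol : ∀ (A : Finset X) (ε : ℝ), 0 < ε → ∃ F : Finset X, F.Nonempty ∧
      ∀ a ∈ A, (((F.image fun s => s * a) \ F).card : ℝ) ≤ ε * F.card) :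
    RightAmenable X := by
  classical
  obtain ⟨e, he⟩ := exists_surjective_nat X
  have hF : ∀ j : ℕ, ∃ F : Finset X, F.Nonempty ∧ ∀ a ∈ (Finset.range (j + 1)).image e,
      (((F.image fun s => s * a) \ F).card : ℝ) ≤ (1 / (j + 1) : ℝ) * F.card := by
    intro j
    refine hFol _ _ ?_
    positivity
  choose F hFne hFfol using hF
  have hFpos : ∀ j, (0 : ℝ) < (F j).card := fun j => by exact_mod_cast (hFne j).card_pos
  -- indicator sums
  set w : Set X → X → ℝ := fun T x => if x ∈ T then (1 : ℝ) else 0 with hw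
  have hw0 : ∀ T x, 0 ≤ w T x := by
    intro T x
    simp only [hw]
    split <;> norm_num
  have hw1 : ∀ T x, w T x ≤ 1 := by
    intro T x
    simp only [hw]
    split <;> norm_num
  set r : Set X → ℕ → ℝ := fun T j => (∑ x ∈ F j, w T x) / (F j).card with hr
  have hsum0 : ∀ (T : Set X) (G : Finset X), 0 ≤ ∑ x ∈ G, w T x :=
    fun T G => Finset.sum_nonneg (fun x _ => hw0 T x)
  have hsum1 : ∀ (T : Set X) (G : Finset X), ∑ x ∈ G, w T x ≤ G.card := by
    intro T G
    calc ∑ x ∈ G, w T x ≤ ∑ _x ∈ G, (1 : ℝ) := Finset.sum_le_sum (fun x _ => hw1 T x)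
      _ = G.card := by rw [Finset.sum_const, nsmul_eq_mul, mul_one]
  have hr0 : ∀ T j, 0 ≤ r T j := by
    intro T j
    simp only [hr]
    exact div_nonneg (hsum0 T (F j)) (hFpos j).le
  set U : Ultrafilter ℕ := Ultrafilter.of atTop with hU
  have hUle : (U : Filter ℕ) ≤ atTop := Ultrafilter.of_le _
  have hlim : ∀ T : Set X, ∃ x, Tendsto (r T) (U : Filter ℕ) (𝓝 x) := by
    intro T
    have hc : (Ultrafilter.map (r T) U : Filter ℝ) ≤ 𝓟 (Set.Icc 0 1) := by
      rw [Ultrafilter.coe_map, le_principal_iff, mem_map]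
      refine Filter.univ_mem' (fun j => ⟨hr0 T j, ?_⟩)
      show r T j ≤ 1
      simp only [hr]
      rw [div_le_one (hFpos j)]
      exact hsum1 T (F j)
    obtain ⟨x, -, hx⟩ := isCompact_Icc.ultrafilter_le_nhds (Ultrafilter.map (r T) U) hc
    exact ⟨x, hx⟩
  choose μ hμ using hlim
  have hNB : (U : Filter ℕ).NeBot := Ultrafilter.neBot U
  refine ⟨μ, ?_, ?_, ?_, ?_⟩
  · -- μ univ = 1
    have h1 : r Set.univ = fun _ => 1 := by
      funext j
      have hpt : ∀ x ∈ F j, w Set.univ x = 1 := fun x _ => by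
        simp only [hw]
        exact if_pos (Set.mem_univ x)
      simp only [hr]
      rw [Finset.sum_congr rfl hpt, Finset.sum_const, nsmul_eq_mul, mul_one]
      exact div_self (hFpos j).ne'
    exact tendsto_nhds_unique (hμ Set.univ) (h1 ▸ tendsto_const_nhds)
  · -- nonneg
    intro T
    exact ge_of_tendsto (hμ T) (Filter.Eventually.of_forall (hr0 T))
  · -- additive
    intro T₁ T₂ hd
    have h1 : r (T₁ ∪ T₂) = fun j => r T₁ j + r T₂ j := by
      funext j
      have hpt : ∀ x ∈ F j, w (T₁ ∪ T₂) x = w T₁ x + w T₂ x := by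
        intro x _
        simp only [hw]
        by_cases h1 : x ∈ T₁
        · have h2 : x ∉ T₂ := fun h2 => Set.disjoint_left.mp hd h1 h2
          rw [if_pos (Set.mem_union_left _ h1), if_pos h1, if_neg h2]
          norm_num
        · by_cases h2 : x ∈ T₂
          · rw [if_pos (Set.mem_union_right _ h2), if_neg h1, if_pos h2]
            norm_num
          · rw [if_neg (fun h => h.elim h1 h2), if_neg h1, if_neg h2]
            norm_num
      simp only [hr]
      rw [Finset.sum_congr rfl hpt, Finset.sum_add_distrib, add_div]
    exact tendsto_nhds_unique (hμ (T₁ ∪ T₂)) (h1 ▸ ((hμ T₁).add (hμ T₂)))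
  · -- invariance
    intro a T
    obtain ⟨j₀, hj₀⟩ := he a
    have hbound : ∀ j, j₀ ≤ j → |r {s | s * a ∈ T} j - r T j| ≤ 1 / (j + 1) := by
      intro j hj
      have haA : a ∈ (Finset.range (j + 1)).image e := by
        rw [Finset.mem_image]
        exact ⟨j₀, Finset.mem_range.mpr (by omega), hj₀⟩
      set G : Finset X := (F j).image (fun s => s * a) with hG
      have hcardG : G.card = (F j).card := Finset.card_image_of_injective _ (hinj a)
      have hptw : ∀ x ∈ F j, w {s | s * a ∈ T} x = w T (x * a) := by
        intro x _
        simp only [hw, Set.mem_setOf_eq]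
      have hsumG : ∑ x ∈ F j, w {s | s * a ∈ T} x = ∑ y ∈ G, w T y := by
        rw [Finset.sum_congr rfl hptw, hG]
        rw [Finset.sum_image (fun x _ y _ h => hinj a h)]
      have hsplitG : ∑ y ∈ G, w T y = (∑ y ∈ G ∩ F j, w T y) + ∑ y ∈ G \ F j, w T y :=
        (Finset.sum_inter_add_sum_sdiff G (F j) (w T)).symm
      have hsplitF : ∑ y ∈ F j, w T y = (∑ y ∈ G ∩ F j, w T y) + ∑ y ∈ F j \ G, w T y := by
        rw [Finset.inter_comm]
        exact (Finset.sum_inter_add_sum_sdiff (F j) G (w T)).symm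
      have hsd : ((F j \ G).card : ℝ) = ((G \ F j).card : ℝ) := by
        exact_mod_cast Finset.card_sdiff_comm hcardG.symm
      have habs : |(∑ x ∈ F j, w {s | s * a ∈ T} x) - ∑ x ∈ F j, w T x| ≤
          ((G \ F j).card : ℝ) := by
        rw [hsumG, hsplitG, hsplitF, abs_sub_le_iff]
        constructor
        · have := hsum1 T (G \ F j)
          have := hsum0 T (F j \ G)
          linarith
        · have h1 := hsum1 T (F j \ G)
          have h2 := hsum0 T (G \ F j)
          rw [hsd] at h1
          linarith
      have hfol := hFfol j a haA
      rw [← hG] at hfol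
      have hsubdiv : r {s | s * a ∈ T} j - r T j =
          ((∑ x ∈ F j, w {s | s * a ∈ T} x) - ∑ x ∈ F j, w T x) / (F j).card := by
        simp only [hr]
        ring
      rw [hsubdiv, abs_div, abs_of_pos (hFpos j), div_le_iff₀ (hFpos j)]
      calc |(∑ x ∈ F j, w {s | s * a ∈ T} x) - ∑ x ∈ F j, w T x|
          ≤ ((G \ F j).card : ℝ) := habs
        _ ≤ (1 / (j + 1) : ℝ) * (F j).card := hfol
    have hdiff : Tendsto (fun j => r {s | s * a ∈ T} j - r T j) atTop (𝓝 0) := by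
      have hev2 : ∀ᶠ j in atTop, ‖r {s | s * a ∈ T} j - r T j‖ ≤ 1 / ((j : ℝ) + 1) := by
        filter_upwards [eventually_ge_atTop j₀] with j hj
        rw [Real.norm_eq_abs]
        exact hbound j hj
      exact squeeze_zero_norm' hev2 tendsto_one_div_add_atTop_nhds_zero_nat
    have htend : Tendsto (r {s | s * a ∈ T}) (U : Filter ℕ) (𝓝 (μ T)) := by
      have h2 := (hμ T).add (hdiff.mono_left hUle)
      rw [add_zero] at h2
      convert h2 using 1
      funext j
      ring
    exact tendsto_nhds_unique (hμ {s | s * a ∈ T}) htend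

open Filter Pointwise in
/-- The Følner condition for semigroups of "monomial type". -/
theorem folner_aux {k : Type*} [Field k] {X : Type*} [Mul X] [DecidableEq X]
    (co : X → k) (dg od : X → ℕ)
    (hod : ∀ s, 0 < od s) (hpowone : ∀ s, co s ^ od s = 1)
    (hcomul : ∀ s t, co (s * t) = co s * co t ^ dg s)
    (hdgmul : ∀ s t, dg (s * t) = dg t * dg s)
    (hpair : ∀ s t, co s = co t → dg s = dg t → s = t)
    (B : Finset X) (hB : B.Nonempty) (ε : ℝ) (hε : 0 < ε) :
    ∃ F : Finset X, F.Nonempty ∧ ∀ a ∈ B,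
      (((F.image fun s => s * a) \ F).card : ℝ) ≤ ε * F.card := by
  classical
  set Q : ℕ := ∏ b ∈ B, od b with hQdef
  have hQpos : 0 < Q := Finset.prod_pos (fun b _ => hod b)
  have hQ1 : ∀ b ∈ B, co b ^ Q = 1 := by
    intro b hb
    obtain ⟨c, hc⟩ := Finset.dvd_prod_of_mem od hb
    rw [hQdef, hc, pow_mul, hpowone, one_pow]
  -- iterated Følner candidates
  set F : ℕ → Finset X := fun N => Nat.rec B (fun _ Fn => Fn ∪ Fn * B) N with hFdef
  have hF0 : F 0 = B := rfl
  have hFsucc : ∀ N, F (N + 1) = F N ∪ F N * B := fun _ => rfl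
  have hFmono : ∀ N, F N ⊆ F (N + 1) := by
    intro N
    rw [hFsucc]
    exact Finset.subset_union_left
  have hFne : ∀ N, (F N).Nonempty := by
    intro N
    induction N with
    | zero => exact hB
    | succ N ih =>
      obtain ⟨x, hx⟩ := ih
      exact ⟨x, hFmono N hx⟩
  -- the structural invariant
  have hInv : ∀ N, ∀ p ∈ F N, co p ^ Q = 1 ∧
      ∃ e : {b // b ∈ B} → ℕ, (∀ b, e b ≤ N + 1) ∧
        dg p = ∏ b : {b // b ∈ B}, dg (b : X) ^ e b := by
    intro N
    induction N with
    | zero =>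
      intro p hp
      refine ⟨hQ1 p hp, fun b => if b = (⟨p, hp⟩ : {b // b ∈ B}) then 1 else 0,
        fun b => by by_cases hb : b = (⟨p, hp⟩ : {b // b ∈ B}) <;> simp [hb], ?_⟩
      rw [Fintype.prod_eq_single (⟨p, hp⟩ : {b // b ∈ B})]
      · simp
      · intro x hx
        simp only [if_neg hx, pow_zero]
    | succ N ih =>
      intro p hp
      rw [hFsucc, Finset.mem_union] at hp
      rcases hp with hp | hp
      · obtain ⟨h1, e, he, h2⟩ := ih p hp
        exact ⟨h1, e, fun b => (he b).trans (by omega), h2⟩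
      · rw [Finset.mem_mul] at hp
        obtain ⟨x, hx, b0, hb0, rfl⟩ := hp
        obtain ⟨h1, e, he, h2⟩ := ih x hx
        constructor
        · rw [hcomul, mul_pow, h1, one_mul, ← pow_mul, mul_comm (dg x) Q, pow_mul,
            hQ1 b0 hb0, one_pow]
        · refine ⟨fun b => e b + (if b = (⟨b0, hb0⟩ : {b // b ∈ B}) then 1 else 0),
            fun b => by
              have hbb := he b
              have hite : (if b = (⟨b0, hb0⟩ : {b // b ∈ B}) then 1 else 0) ≤ 1 := by
                split <;> omega
              show e b + (if b = (⟨b0, hb0⟩ : {b // b ∈ B}) then 1 else 0) ≤ N + 1 + 1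
              omega, ?_⟩
          have hsplit : (∏ b : {b // b ∈ B},
              dg (b : X) ^ (e b + if b = (⟨b0, hb0⟩ : {b // b ∈ B}) then 1 else 0)) =
              (∏ b : {b // b ∈ B}, dg (b : X) ^ e b) *
              ∏ b : {b // b ∈ B},
                dg (b : X) ^ (if b = (⟨b0, hb0⟩ : {b // b ∈ B}) then 1 else 0) := by
            rw [← Finset.prod_mul_distrib]
            exact Finset.prod_congr rfl (fun _ _ => pow_add _ _ _)
          have hdelta : (∏ b : {b // b ∈ B},
              dg (b : X) ^ (if b = (⟨b0, hb0⟩ : {b // b ∈ B}) then 1 else 0)) = dg b0 := by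
            rw [Fintype.prod_eq_single (⟨b0, hb0⟩ : {b // b ∈ B})]
            · simp
            · intro x hx
              simp only [if_neg hx, pow_zero]
          rw [hdgmul, h2, hsplit, hdelta, mul_comm]
  -- the counting bound
  set Zf : Finset k := (Polynomial.nthRoots Q (1 : k)).toFinset with hZf
  have hcard : ∀ N, (F N).card ≤ Zf.card * (N + 2) ^ B.card := by
    intro N
    set D : Finset ℕ := Finset.image
      (fun ee : {b // b ∈ B} → Fin (N + 2) => ∏ b : {b // b ∈ B}, dg (b : X) ^ (ee b : ℕ))
      Finset.univ with hD
    have hmaps : ∀ p ∈ F N, (co p, dg p) ∈ Zf ×ˢ D := by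
      intro p hp
      obtain ⟨h1, e, he, h2⟩ := hInv N p hp
      rw [Finset.mem_product]
      constructor
      · rw [hZf, Multiset.mem_toFinset, Polynomial.mem_nthRoots hQpos]
        exact h1
      · rw [hD, Finset.mem_image]
        refine ⟨fun b => ⟨e b, by have := he b; omega⟩, Finset.mem_univ _, ?_⟩
        exact h2.symm
    have hinjon : Set.InjOn (fun p => (co p, dg p)) (F N) := by
      intro s _ t _ h
      exact hpair s t (congrArg Prod.fst h) (congrArg Prod.snd h)
    calc (F N).card ≤ (Zf ×ˢ D).card := Finset.card_le_card_of_injOn _ hmaps hinjon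
      _ = Zf.card * D.card := Finset.card_product _ _
      _ ≤ Zf.card * (N + 2) ^ B.card := by
          apply Nat.mul_le_mul_left
          calc D.card ≤ (Finset.univ : Finset ({b // b ∈ B} → Fin (N + 2))).card :=
                Finset.card_image_le
            _ = (N + 2) ^ B.card := by
                rw [Finset.card_univ, Fintype.card_fun, Fintype.card_fin, Fintype.card_coe]
  -- growth argument
  have hgrow : ∃ N, ((F (N + 1)).card : ℝ) ≤ (1 + ε) * (F N).card := by
    by_contra hcon
    push_neg at hcon
    have hlow : ∀ N, (1 + ε) ^ N ≤ ((F N).card : ℝ) := by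
      intro N
      induction N with
      | zero =>
        simpa using (Nat.one_le_cast (α := ℝ)).2 (hFne 0).card_pos
      | succ N ih =>
        have h1 : (1 + ε) ^ (N + 1) = (1 + ε) * (1 + ε) ^ N := by ring
        rw [h1]
        calc (1 + ε) * (1 + ε) ^ N ≤ (1 + ε) * (F N).card := by
              apply mul_le_mul_of_nonneg_left ih (by linarith)
          _ ≤ (F (N + 1)).card := (hcon N).le
    set c : ℕ := B.card with hc
    set Z : ℝ := (Zf.card : ℝ) with hZ
    have hZ0 : 0 ≤ Z := Nat.cast_nonneg _
    have hlo := isLittleO_pow_const_const_pow_of_one_lt (R := ℝ) c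
      (show (1 : ℝ) < 1 + ε by linarith)
    have hδ : (0 : ℝ) < 1 / (Z * 3 ^ c + 1) := by positivity
    have hev := (Asymptotics.isLittleO_iff.mp hlo hδ).and (eventually_ge_atTop 1)
    obtain ⟨N, hNle, hN1⟩ := hev.exists
    have hnorm : ((N : ℝ)) ^ c ≤ (1 / (Z * 3 ^ c + 1)) * (1 + ε) ^ N := by
      have h1 : ‖((N : ℝ)) ^ c‖ = ((N : ℝ)) ^ c := by
        rw [Real.norm_eq_abs, abs_of_nonneg (by positivity)]
      have h2 : ‖(1 + ε) ^ N‖ = (1 + ε) ^ N := by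
        rw [Real.norm_eq_abs, abs_of_nonneg (by positivity)]
      calc ((N : ℝ)) ^ c = ‖((N : ℝ)) ^ c‖ := h1.symm
        _ ≤ (1 / (Z * 3 ^ c + 1)) * ‖(1 + ε) ^ N‖ := hNle
        _ = (1 / (Z * 3 ^ c + 1)) * (1 + ε) ^ N := by rw [h2]
    have hupper : ((F N).card : ℝ) ≤ Z * ((N : ℝ) + 2) ^ c := by
      have := hcard N
      have h1 : ((F N).card : ℝ) ≤ ((Zf.card * (N + 2) ^ c : ℕ) : ℝ) := Nat.cast_le.mpr this
      rw [Nat.cast_mul, Nat.cast_pow] at h1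
      convert h1 using 3
      push_cast
      ring
    have hN2 : ((N : ℝ) + 2) ^ c ≤ 3 ^ c * (N : ℝ) ^ c := by
      rw [← mul_pow]
      apply pow_le_pow_left₀ (by positivity)
      have : (1 : ℝ) ≤ (N : ℝ) := by exact_mod_cast hN1
      linarith
    have hfinal : ((F N).card : ℝ) < (1 + ε) ^ N := by
      have hpos : (0 : ℝ) < (1 + ε) ^ N := by positivity
      calc ((F N).card : ℝ) ≤ Z * ((N : ℝ) + 2) ^ c := hupper
        _ ≤ Z * (3 ^ c * (N : ℝ) ^ c) := by
            apply mul_le_mul_of_nonneg_left hN2 hZ0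
        _ = (Z * 3 ^ c) * (N : ℝ) ^ c := by ring
        _ ≤ (Z * 3 ^ c) * ((1 / (Z * 3 ^ c + 1)) * (1 + ε) ^ N) := by
            apply mul_le_mul_of_nonneg_left hnorm (by positivity)
        _ = ((Z * 3 ^ c) / (Z * 3 ^ c + 1)) * (1 + ε) ^ N := by ring
        _ < 1 * (1 + ε) ^ N := by
            apply mul_lt_mul_of_pos_right _ hpos
            rw [div_lt_one (by positivity)]
            linarith
        _ = (1 + ε) ^ N := one_mul _
    exact absurd (hlow N) (by linarith)
  obtain ⟨N, hN⟩ := hgrow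
  refine ⟨F N, hFne N, ?_⟩
  intro a ha
  have hsub : (F N).image (fun s => s * a) ⊆ F (N + 1) := by
    intro z hz
    rw [Finset.mem_image] at hz
    obtain ⟨x, hx, rfl⟩ := hz
    rw [hFsucc]
    exact Finset.mem_union_right _ (Finset.mul_mem_mul hx ha)
  have h1 : ((F N).image (fun s => s * a)) \ F N ⊆ F (N + 1) \ F N :=
    Finset.sdiff_subset_sdiff hsub (le_refl _)
  have h2 : ((F (N + 1) \ F N).card : ℝ) = (F (N + 1)).card - (F N).card := by
    rw [Finset.card_sdiff_of_subset (hFmono N), Nat.cast_sub (Finset.card_le_card (hFmono N))]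
  calc ((((F N).image fun s => s * a) \ F N).card : ℝ)
      ≤ ((F (N + 1) \ F N).card : ℝ) := Nat.cast_le.mpr (Finset.card_le_card h1)
    _ = (F (N + 1)).card - (F N).card := h2
    _ ≤ (1 + ε) * (F N).card - (F N).card := by linarith
    _ = ε * (F N).card := by ring

/-- Every (nonempty) subsemigroup of `Z^U` is right amenable. -/
theorem rightAmenable_of_le_ZU {k : Type*} [Field k] [IsAlgClosed k] [CharZero k]
    (S : Subsemigroup (PolyComp k)) (hS : S ≤ ZU k) (hne : (S : Set (PolyComp k)).Nonempty) :
    RightAmenable S := by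
  classical
  haveI hne' : Nonempty S := hne.to_subtype
  have key : ∀ s : S, ∃ ω : k, ∃ n : ℕ, ∃ m : ℕ, 0 < m ∧ ω ^ m = 1 ∧ 2 ≤ n ∧
      ((s : PolyComp k)).toPoly = C ω * X ^ n := by
    intro s
    obtain ⟨ω, n, ⟨m, hm, hω⟩, hn, hp⟩ := hS s.2
    exact ⟨ω, n, m, hm, hω, hn, hp⟩
  choose co dg od hod hpow hdg heq using key
  have hco0 : ∀ s : S, co s ≠ 0 := by
    intro s h
    have := hpow s
    rw [h, zero_pow (hod s).ne'] at this
    exact one_ne_zero this.symm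
  have hmono : ∀ (ζ ξ : k) (cn dn : ℕ), ζ ≠ 0 → ξ ≠ 0 →
      (C ζ * X ^ cn : Polynomial k) = C ξ * X ^ dn → ζ = ξ ∧ cn = dn := by
    intro ζ ξ cn dn hζ hξ h
    have hd : cn = dn := by
      have h2 := congrArg natDegree h
      rwa [natDegree_C_mul_X_pow cn ζ hζ, natDegree_C_mul_X_pow dn ξ hξ] at h2
    subst hd
    refine ⟨?_, rfl⟩
    have h3 := congrArg (fun p => coeff p cn) h
    simpa [coeff_C_mul, coeff_X_pow] using h3
  have hmulform : ∀ s t : S, ((s * t : S) : PolyComp k).toPoly =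
      C (co s * co t ^ dg s) * X ^ (dg t * dg s) := by
    intro s t
    have h0 : ((s * t : S) : PolyComp k).toPoly =
        ((s : PolyComp k).toPoly).comp ((t : PolyComp k).toPoly) := rfl
    rw [h0, heq s, heq t, Polynomial.mul_comp, Polynomial.C_comp, Polynomial.X_pow_comp,
      mul_pow, ← map_pow, ← pow_mul, map_mul, mul_assoc]
  have hprodne : ∀ s t : S, co s * co t ^ dg s ≠ 0 := fun s t =>
    mul_ne_zero (hco0 s) (pow_ne_zero _ (hco0 t))
  have hcomul : ∀ s t : S, co (s * t) = co s * co t ^ dg s := by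
    intro s t
    exact (hmono _ _ _ _ (hco0 (s * t)) (hprodne s t)
      ((heq (s * t)).symm.trans (hmulform s t))).1
  have hdgmul : ∀ s t : S, dg (s * t) = dg t * dg s := by
    intro s t
    exact (hmono _ _ _ _ (hco0 (s * t)) (hprodne s t)
      ((heq (s * t)).symm.trans (hmulform s t))).2
  have hpair : ∀ s t : S, co s = co t → dg s = dg t → s = t := by
    intro s t h1 h2
    apply Subtype.ext
    have hs := heq s
    have ht := heq t
    rw [h1, h2] at hs
    show (s : PolyComp k) = (t : PolyComp k)
    exact hs.trans ht.symm
  have hcanc : ∀ a : S, Function.Injective (fun s : S => s * a) := by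
    intro a s t h
    simp only at h
    have hc : co s * co a ^ dg s = co t * co a ^ dg t := by
      rw [← hcomul s a, ← hcomul t a, h]
    have hd : dg a * dg s = dg a * dg t := by
      rw [← hdgmul s a, ← hdgmul t a, h]
    have hds : dg s = dg t :=
      Nat.eq_of_mul_eq_mul_left (lt_of_lt_of_le two_pos (hdg a)) hd
    apply hpair s t _ hds
    rw [hds] at hc
    exact mul_right_cancel₀ (pow_ne_zero _ (hco0 a)) hc
  haveI hcnt : Countable S := by
    set R : Set k := {x : k | ∃ m : ℕ, 0 < m ∧ x ^ m = 1} with hR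
    have hRc : R.Countable := by
      have hsub : R ⊆ ⋃ m : ℕ, {x : k | x ^ (m + 1) = 1} := by
        rintro x ⟨m, hm, hx⟩
        refine Set.mem_iUnion.2 ⟨m - 1, ?_⟩
        show x ^ (m - 1 + 1) = 1
        rwa [Nat.sub_add_cancel hm]
      refine Set.Countable.mono hsub (Set.countable_iUnion fun m => Set.Finite.countable ?_)
      apply Set.Finite.subset (Polynomial.nthRoots (m + 1) (1 : k)).toFinset.finite_toSet
      intro x hx
      rw [Finset.mem_coe, Multiset.mem_toFinset, Polynomial.mem_nthRoots (Nat.succ_pos m)]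
      exact hx
    haveI : Countable R := hRc.to_subtype
    have hinj : Function.Injective
        (fun s : S => ((⟨co s, od s, hod s, hpow s⟩ : R), dg s)) := by
      intro s t h
      have h1 : co s = co t := congrArg (fun x => (x.1 : k)) h
      have h2 : dg s = dg t := congrArg Prod.snd h
      exact hpair s t h1 h2
    exact hinj.countable
  apply rightAmenable_of_folner hcanc
  intro A ε hε
  obtain ⟨s₀⟩ := hne'
  obtain ⟨F, hFne, hFf⟩ := folner_aux co dg od hod hpow hcomul hdgmul hpair
    (insert s₀ A) (Finset.insert_nonempty _ _) ε hε
  exact ⟨F, hFne, fun a ha => hFf a (Finset.mem_insert_of_mem ha)⟩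
end

section
/- Let k be a field, U a subsemigroup of k* containing 1 and containing an element a that is not a root of unity, and N a subsemigroup of ℕ\{1}. Then the semidirect product semigroup S = U ×_ρ N, with operation (u,n)(v,m) = (u·v^n, nm), is not finitely generated. -/
/-- The multiplication of the semidirect product `U ×_ρ N`, where `U` is a subsemigroup of `k*`
containing `1` (i.e. a submonoid of `kˣ`), `N` is a subsemigroup of `ℕ \ {1}`, and
`ρ_n(v) = v^n`: the operation is `(u, n)(v, m) = (u·v^n, nm)`. -/
def sdMul {k : Type*} [Field k] (U : Submonoid kˣ) (N : Subsemigroup ℕ) :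
    Mul (↥U × ↥N) :=
  ⟨fun p q => (⟨(p.1 : kˣ) * (q.1 : kˣ) ^ (p.2 : ℕ), mul_mem p.1.2 (pow_mem q.1.2 _)⟩,
    ⟨(p.2 : ℕ) * (q.2 : ℕ), mul_mem p.2.2 q.2.2⟩)⟩

/-- Let `U` be a subsemigroup of `k*` containing `1` and containing an element `a` that is not a
root of unity, and let `N` be a (nonempty) subsemigroup of `ℕ \ {1}`. Then the semidirect
product `S = U ×_ρ N` with operation `(u, n)(v, m) = (u·v^n, nm)` is not finitely generated. -/
theorem semidirect_not_finitely_generated {k : Type*} [Field k]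
    (U : Submonoid kˣ) (a : kˣ) (haU : a ∈ U) (har : ∀ m : ℕ, 0 < m → a ^ m ≠ 1)
    (N : Subsemigroup ℕ) (hN : ∀ n ∈ N, 2 ≤ n) (hNne : (N : Set ℕ).Nonempty) :
    ¬ ∃ F : Finset (↥U × ↥N),
        @Subsemigroup.closure _ (sdMul U N) (F : Set (↥U × ↥N)) = ⊤ := by
  letI : Mul (↥U × ↥N) := sdMul U N
  rintro ⟨F, hF⟩
  -- the least element of N
  set n : ℕ := sInf (N : Set ℕ) with hn
  have hnN : n ∈ N := Nat.sInf_mem hNne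
  have hn2 : 2 ≤ n := hN n hnN
  -- the indecomposable elements (aʲ, n)
  have hpow : ∀ j : ℕ, a ^ j ∈ U := fun j => pow_mem haU j
  let s : ℕ → ↥U × ↥N := fun j => (⟨a ^ j, hpow j⟩, ⟨n, hnN⟩)
  -- every sⱼ is in F
  have hmem : ∀ j, s j ∈ F := by
    intro j
    have htop : s j ∈ @Subsemigroup.closure _ (sdMul U N) (F : Set (↥U × ↥N)) := by
      rw [hF]; trivial
    have := Subsemigroup.closure_induction
      (p := fun x _ => x ∈ F ∨ ∃ y z : ↥U × ↥N, x = y * z)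
      (fun x hx => Or.inl hx)
      (fun x y _ _ _ _ => Or.inr ⟨x, y, rfl⟩) htop
    rcases this with h | ⟨y, z, hyz⟩
    · exact h
    · exfalso
      have h2 : n = ((y.2 : ℕ) * (z.2 : ℕ)) := congrArg (fun p => ((Prod.snd p : ↥N) : ℕ)) hyz
      have hy : n ≤ (y.2 : ℕ) := Nat.sInf_le y.2.2
      have hz : 2 ≤ (z.2 : ℕ) := hN _ z.2.2
      have : n < (y.2 : ℕ) * (z.2 : ℕ) := by nlinarith
      omega
  -- injectivity
  have key : ∀ i j : ℕ, i < j → s i ≠ s j := by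
    intro i j hlt hij
    have h1 : a ^ i = a ^ j := congrArg (fun p => ((Prod.fst p : ↥U) : kˣ)) hij
    have h2 : a ^ j = a ^ i * a ^ (j - i) := by
      rw [← pow_add]; congr 1; omega
    have : a ^ (j - i) = 1 := by
      have := h1.trans h2
      exact (mul_left_cancel (a := a ^ i) (by rw [mul_one, ← this])).symm
    exact har (j - i) (by omega) this
  have hinj : Function.Injective s := by
    intro i j hij
    rcases lt_trichotomy i j with h | h | h
    · exact absurd hij (key i j h)
    · exact h
    · exact absurd hij.symm (key j i h)
  -- contradiction: ℕ injects into a finite set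
  have : Function.Injective fun j => (⟨s j, hmem j⟩ : {x // x ∈ F}) := by
    intro i j h
    exact hinj (congrArg Subtype.val h)
  haveI := Finite.of_injective _ this
  exact not_finite ℕ
end
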